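/- arXiv:2307.07279 — 9 statements merged into one kernel-verified Lean document; each statement's English description precedes it below -/
import Mathlib

section
/- Let G be a connected finite simple graph with at least 2 vertices and let v be a vertex of G. The following are equivalent: (i) v is the L-root leaf of some DFS ordering of G whose first vertex is v; (ii) v is the L-root leaf of every DFS ordering of G whose first vertex is v; (iii) v is not a cut vertex of G. -/
open SimpleGraph

variable {V : Type*}

/-- A generic search (GS) ordering: every vertex other than the first has an
earlier neighbor. -/
def IsGSOrdering [Fintype V] (G : SimpleGraph V) (σ : Fin (Fintype.card V) ≃ V) : Prop :=
  ∀ w : V, (σ.symm w).val ≠ 0 → ∃ u : V, σ.symm u < σ.symm w ∧ G.Adj u w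

/-- DFS ordering (Corneil–Krueger four-point characterization). -/
def IsDFSOrdering [Fintype V] (G : SimpleGraph V) (σ : Fin (Fintype.card V) ≃ V) : Prop :=
  IsGSOrdering G σ ∧ ∀ a b c : V, σ.symm a < σ.symm b → σ.symm b < σ.symm c →
    G.Adj a c → ¬ G.Adj a b →
      ∃ d : V, σ.symm a < σ.symm d ∧ σ.symm d < σ.symm b ∧ G.Adj d b

/-- BFS ordering (Corneil–Krueger four-point characterization). -/
def IsBFSOrdering [Fintype V] (G : SimpleGraph V) (σ : Fin (Fintype.card V) ≃ V) : Prop :=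
  IsGSOrdering G σ ∧ ∀ a b c : V, σ.symm a < σ.symm b → σ.symm b < σ.symm c →
    G.Adj a c → ¬ G.Adj a b →
      ∃ d : V, σ.symm d < σ.symm a ∧ G.Adj d b

/-- LDFS ordering (Corneil–Krueger four-point characterization). -/
def IsLDFSOrdering [Fintype V] (G : SimpleGraph V) (σ : Fin (Fintype.card V) ≃ V) : Prop :=
  IsGSOrdering G σ ∧ ∀ a b c : V, σ.symm a < σ.symm b → σ.symm b < σ.symm c →
    G.Adj a c → ¬ G.Adj a b →
      ∃ d : V, σ.symm a < σ.symm d ∧ σ.symm d < σ.symm b ∧ G.Adj d b ∧ ¬ G.Adj d c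

/-- MNS ordering (Corneil–Krueger four-point characterization). -/
def IsMNSOrdering [Fintype V] (G : SimpleGraph V) (σ : Fin (Fintype.card V) ≃ V) : Prop :=
  IsGSOrdering G σ ∧ ∀ a b c : V, σ.symm a < σ.symm b → σ.symm b < σ.symm c →
    G.Adj a c → ¬ G.Adj a b →
      ∃ d : V, σ.symm d < σ.symm b ∧ G.Adj d b ∧ ¬ G.Adj d c

/-- MCS ordering: for positions `i < j`, the vertex at position `i` has at least as many
neighbors among the vertices at positions `< i` as the vertex at position `j` has. -/
def IsMCSOrdering [Fintype V] (G : SimpleGraph V) (σ : Fin (Fintype.card V) ≃ V) : Prop :=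
  ∀ i j : Fin (Fintype.card V), i < j →
    Nat.card {k : Fin (Fintype.card V) // k < i ∧ G.Adj (σ k) (σ j)} ≤
    Nat.card {k : Fin (Fintype.card V) // k < i ∧ G.Adj (σ k) (σ i)}

/-- A perfect elimination ordering: the earlier neighbors of any vertex form a clique. -/
def IsPEO [Fintype V] (G : SimpleGraph V) (σ : Fin (Fintype.card V) ≃ V) : Prop :=
  ∀ u v w : V, σ.symm u < σ.symm w → σ.symm v < σ.symm w → u ≠ v →
    G.Adj u w → G.Adj v w → G.Adj u v

/-- `u` is the F-parent of `v`: `v` is not the first vertex and `u` is the earliest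
neighbor of `v` in the ordering. -/
def FParent [Fintype V] (G : SimpleGraph V) (σ : Fin (Fintype.card V) ≃ V) (u v : V) : Prop :=
  (σ.symm v).val ≠ 0 ∧ G.Adj u v ∧ ∀ w : V, G.Adj w v → σ.symm u ≤ σ.symm w

/-- `u` is the L-parent of `v`: `v` is not the first vertex and `u` is the last
neighbor of `v` occurring before `v` in the ordering. -/
def LParent [Fintype V] (G : SimpleGraph V) (σ : Fin (Fintype.card V) ≃ V) (u v : V) : Prop :=
  (σ.symm v).val ≠ 0 ∧ G.Adj u v ∧ σ.symm u < σ.symm v ∧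
    ∀ w : V, G.Adj w v → σ.symm w < σ.symm v → σ.symm w ≤ σ.symm u

/-- `v` is an F-branch leaf: `v` is not the first vertex and is the F-parent of no vertex. -/
def FBranchLeaf [Fintype V] (G : SimpleGraph V) (σ : Fin (Fintype.card V) ≃ V) (v : V) : Prop :=
  (σ.symm v).val ≠ 0 ∧ ∀ w : V, ¬ FParent G σ v w

/-- `v` is the F-root leaf: `v` is the first vertex and is the F-parent of exactly one vertex. -/
def FRootLeaf [Fintype V] (G : SimpleGraph V) (σ : Fin (Fintype.card V) ≃ V) (v : V) : Prop :=
  (σ.symm v).val = 0 ∧ ∃! w : V, FParent G σ v w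

/-- `v` is an L-branch leaf: `v` is not the first vertex and is the L-parent of no vertex. -/
def LBranchLeaf [Fintype V] (G : SimpleGraph V) (σ : Fin (Fintype.card V) ≃ V) (v : V) : Prop :=
  (σ.symm v).val ≠ 0 ∧ ∀ w : V, ¬ LParent G σ v w

/-- `v` is the L-root leaf: `v` is the first vertex and is the L-parent of exactly one vertex. -/
def LRootLeaf [Fintype V] (G : SimpleGraph V) (σ : Fin (Fintype.card V) ≃ V) (v : V) : Prop :=
  (σ.symm v).val = 0 ∧ ∃! w : V, LParent G σ v w

/-- `v` is an L-leaf: the L-root leaf or an L-branch leaf. -/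
def LLeaf [Fintype V] (G : SimpleGraph V) (σ : Fin (Fintype.card V) ≃ V) (v : V) : Prop :=
  LRootLeaf G σ v ∨ LBranchLeaf G σ v

/-- `v` is the end-vertex (last vertex) of the ordering `σ`. -/
def IsEndVertex [Fintype V] (σ : Fin (Fintype.card V) ≃ V) (v : V) : Prop :=
  (σ.symm v).val = Fintype.card V - 1

/-- `v` is a cut vertex: deleting `v` yields a disconnected graph. -/
def CutVertex (G : SimpleGraph V) (v : V) : Prop :=
  ¬ (G.induce {w : V | w ≠ v}).Connected

/-- A graph is chordal if every cycle of length at least 4 has a chord, i.e. an edge of the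
graph joining two vertices of the cycle which is not an edge of the cycle. -/
def IsChordal (G : SimpleGraph V) : Prop :=
  ∀ ⦃v : V⦄ (w : G.Walk v v), w.IsCycle → 4 ≤ w.length →
    ∃ x y : V, x ∈ w.support ∧ y ∈ w.support ∧ G.Adj x y ∧ s(x, y) ∉ w.edges

/-- Crossing lemma: a walk from inside `P` to outside `P` crosses an edge. -/
lemma walk_crossing {G : SimpleGraph V} {P : V → Prop} :
    ∀ {x y : V}, G.Walk x y → P x → ¬ P y → ∃ p q, P p ∧ ¬ P q ∧ G.Adj p q := by
  intro x y w
  induction w with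
  | nil => intro h h'; exact absurd h h'
  | @cons a b c h p ih =>
    intro hx hy
    by_cases hb : P b
    · exact ih hb hy
    · exact ⟨a, b, hx, hb, h⟩

/-- The DFS invariant for a partially-built ordering list. -/
def DfsInv (G : SimpleGraph V) (l : List V) : Prop :=
  ∀ i, (hi : i < l.length) → 0 < i →
    ∃ j, ∃ hj : j < i, G.Adj (l[j]'(hj.trans hi)) l[i] ∧
      ∀ j', (hj' : j' < i) → j < j' → ∀ y, G.Adj (l[j']'(hj'.trans hi)) y → y ∈ l.take i

open Classical in
lemma dfs_extend [Fintype V] {G : SimpleGraph V} (hG : G.Connected) {l : List V}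
    (hnd : l.Nodup) (h0 : 0 < l.length)
    (hlt : l.length < Fintype.card V) (hInv : DfsInv G l) :
    ∃ x, x ∉ l ∧ DfsInv G (l ++ [x]) := by
  -- there is an unvisited vertex
  have hz : ∃ z, z ∉ l := by
    by_contra hc
    push_neg at hc
    have h1 : (Finset.univ : Finset V) ⊆ l.toFinset := fun z _ => List.mem_toFinset.mpr (hc z)
    have h2 : Fintype.card V ≤ l.toFinset.card := by
      simpa using Finset.card_le_card h1
    have h3 : l.toFinset.card = l.length := List.toFinset_card_of_nodup hnd
    omega
  obtain ⟨z, hz⟩ := hz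
  -- a visited vertex with an unvisited neighbor
  have hx0 : l[0]'h0 ∈ l := List.getElem_mem h0
  obtain ⟨p, q, hp, hq, hpq⟩ := walk_crossing ((hG.preconnected (l[0]'h0) z).some) hx0 hz
  -- p has an index
  obtain ⟨j₀, hj₀, hj₀e⟩ := List.mem_iff_getElem.mp hp
  set P : ℕ → Prop := fun j => ∃ h : j < l.length, ∃ y, y ∉ l ∧ G.Adj (l[j]'h) y with hP
  have hPj₀ : P j₀ := ⟨hj₀, q, hq, hj₀e ▸ hpq⟩
  set j := Nat.findGreatest P l.length with hj
  have hPj : P j := Nat.findGreatest_spec (le_of_lt hj₀) hPj₀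
  obtain ⟨hjl, x, hxl, hadj⟩ := hPj
  refine ⟨x, hxl, ?_⟩
  intro i hi hip
  have hlen : (l ++ [x]).length = l.length + 1 := by simp
  rw [hlen] at hi
  rcases Nat.lt_or_ge i l.length with hil | hil
  · -- old index: use old invariant
    obtain ⟨j', hj', hadj', hmax⟩ := hInv i hil hip
    refine ⟨j', hj', ?_, ?_⟩
    · rwa [List.getElem_append_left (hj'.trans hil), List.getElem_append_left hil]
    · intro j'' hj'' hgt y hy
      rw [List.getElem_append_left (hj''.trans hil)] at hy
      rw [List.take_append_of_le_length (le_of_lt hil)]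
      exact hmax j'' hj'' hgt y hy
  · -- new index
    have hie : i = l.length := by omega
    subst hie
    refine ⟨j, hjl, ?_, ?_⟩
    · rw [List.getElem_append_left hjl, List.getElem_concat_length rfl]
      exact hadj
    · intro j' hj' hgt y hy
      rw [List.getElem_append_left hj'] at hy
      rw [List.take_append_of_le_length (le_refl _), List.take_length]
      by_contra hyl
      exact Nat.findGreatest_is_greatest hgt (le_of_lt hj') ⟨hj', y, hyl, hy⟩

lemma dfs_list [Fintype V] {G : SimpleGraph V} (hG : G.Connected) (v : V)
    (hn : 1 ≤ Fintype.card V) :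
    ∃ l : List V, l.length = Fintype.card V ∧ l.Nodup ∧
      (∃ h : 0 < l.length, l[0]'h = v) ∧ DfsInv G l := by
  suffices h : ∀ m (l : List V), l.Nodup → (∃ h : 0 < l.length, l[0]'h = v) → DfsInv G l →
      l.length + m = Fintype.card V →
      ∃ l' : List V, l'.length = Fintype.card V ∧ l'.Nodup ∧
        (∃ h : 0 < l'.length, l'[0]'h = v) ∧ DfsInv G l' by
    refine h (Fintype.card V - 1) [v] (by simp) ⟨by simp, rfl⟩ ?_ (by simp; omega)
    intro i hi hip; simp at hi; omega
  intro m
  induction m with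
  | zero => intro l h1 h2 h3 h4; exact ⟨l, by omega, h1, h2, h3⟩
  | succ k ih =>
    intro l h1 h2 h3 h4
    obtain ⟨h0, hv⟩ := h2
    obtain ⟨x, hxl, hInv'⟩ := dfs_extend hG h1 h0 (by omega) h3
    refine ih (l ++ [x]) ?_ ?_ hInv' (by simp at h4 ⊢; omega)
    · exact List.Nodup.append h1 (by simp) (by simpa using fun h => (hxl h).elim)
    · refine ⟨by simp, ?_⟩
      rw [List.getElem_append_left h0]; exact hv

open Classical in
lemma exists_dfs [Fintype V] {G : SimpleGraph V} (hG : G.Connected) (v : V)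
    (hn : 1 ≤ Fintype.card V) :
    ∃ σ : Fin (Fintype.card V) ≃ V, IsDFSOrdering G σ ∧ (σ.symm v).val = 0 := by
  obtain ⟨l, hlen, hnd, ⟨h0, hv⟩, hInv⟩ := dfs_list hG v hn
  set e : Fin (Fintype.card V) → V := fun i => l[i.val]'(by omega) with he
  have hinj : Function.Injective e := by
    intro a b hab
    have := List.Nodup.getElem_inj_iff hnd (hi := by omega) (hj := by omega) |>.mp hab
    exact Fin.ext this
  have hbij : Function.Bijective e :=
    (Fintype.bijective_iff_injective_and_card e).mpr ⟨hinj, by simp⟩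
  set σ : Fin (Fintype.card V) ≃ V := Equiv.ofBijective e hbij with hσ
  have hsymm : ∀ w : V, l[(σ.symm w).val]'(by omega) = w := by
    intro w
    have : e (σ.symm w) = w := Equiv.ofBijective_apply_symm_apply e hbij w
    exact this
  have hpos : ∀ (w : V) (i : ℕ) (hi : i < l.length), l[i] = w → (σ.symm w).val = i := by
    intro w i hi hw
    have h2 : e (σ.symm w) = e ⟨i, by omega⟩ := (hsymm w).trans hw.symm
    have := hinj h2
    exact congrArg Fin.val this
  have hmemtake : ∀ (y : V) (i : ℕ), y ∈ l.take i → (σ.symm y).val < i := by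
    intro y i hy
    obtain ⟨m, hm, hme⟩ := List.mem_iff_getElem.mp hy
    rw [List.getElem_take] at hme
    have := hpos y m (by simp at hm; omega) hme
    simp at hm; omega
  have hGS : IsGSOrdering G σ := by
    intro w hw
    obtain ⟨j, hj, hadj, _⟩ := hInv (σ.symm w).val (by omega) (by omega)
    refine ⟨l[j]'(by omega), ?_, by rwa [hsymm w] at hadj⟩
    have := hpos (l[j]'(by omega)) j (by omega) rfl
    exact Fin.lt_def.mpr (by omega)
  refine ⟨σ, ⟨hGS, ?_⟩, hpos v 0 h0 hv⟩
  intro a b c hab hbc hac hnab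
  obtain ⟨j, hj, hadj, hmax⟩ := hInv (σ.symm b).val (by omega) (by
    have : (0:ℕ) ≤ (σ.symm a).val := Nat.zero_le _
    have := Fin.lt_def.mp hab; omega)
  rw [hsymm b] at hadj
  have hja : (σ.symm a).val < j := by
    rcases Nat.lt_trichotomy j (σ.symm a).val with h | h | h
    · exfalso
      have hc := hmax (σ.symm a).val (Fin.lt_def.mp hab) h c (by rwa [hsymm a]) 
      have := hmemtake c _ hc
      have := Fin.lt_def.mp hbc; omega
    · exfalso
      apply hnab
      have hla : l[j]'(by omega) = a := by subst h; exact hsymm a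
      rwa [hla] at hadj
    · exact h
  refine ⟨l[j]'(by omega), ?_, ?_, hadj⟩
  · have := hpos (l[j]'(by omega)) j (by omega) rfl
    exact Fin.lt_def.mpr (by omega)
  · have := hpos (l[j]'(by omega)) j (by omega) rfl
    exact Fin.lt_def.mpr (by omega)

open Classical in
/-- Every non-first vertex of a GS ordering has an L-parent. -/
lemma lparent_exists [Fintype V] {G : SimpleGraph V} {σ : Fin (Fintype.card V) ≃ V}
    (hGS : IsGSOrdering G σ) {w : V} (hw : (σ.symm w).val ≠ 0) :
    ∃ x : V, LParent G σ x w := by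
  obtain ⟨u, hu1, hu2⟩ := hGS w hw
  set N : Finset V := Finset.univ.filter (fun x => G.Adj x w ∧ σ.symm x < σ.symm w) with hN
  have hNne : N.Nonempty := ⟨u, by simp [hN, hu1, hu2]⟩
  obtain ⟨x, hxN, hxmax⟩ := Finset.exists_max_image N (fun x => σ.symm x) hNne
  simp only [hN, Finset.mem_filter, Finset.mem_univ, true_and] at hxN
  refine ⟨x, hw, hxN.1, hxN.2, ?_⟩
  intro y hy1 hy2
  exact hxmax y (by simp [hN, hy1, hy2])

/-- The first vertex is the L-parent of the second vertex. -/
lemma first_lparent_second [Fintype V] {G : SimpleGraph V} {σ : Fin (Fintype.card V) ≃ V}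
    (hn : 2 ≤ Fintype.card V) (hGS : IsGSOrdering G σ) {v : V} (h0 : (σ.symm v).val = 0) :
    LParent G σ v (σ ⟨1, by omega⟩) := by
  set u₁ := σ ⟨1, by omega⟩ with hu₁
  have hp1 : σ.symm u₁ = ⟨1, by omega⟩ := Equiv.symm_apply_apply σ _
  have hval1 : (σ.symm u₁).val = 1 := by rw [hp1]
  have hne : (σ.symm u₁).val ≠ 0 := by omega
  obtain ⟨u, hu1, hu2⟩ := hGS u₁ hne
  have hu0 : (σ.symm u).val = 0 := by
    have := Fin.lt_def.mp hu1; omega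
  have huv : u = v := by
    have : σ.symm u = σ.symm v := Fin.ext (by rw [hu0, h0])
    exact σ.symm.injective this
  subst huv
  refine ⟨hne, hu2, hu1, ?_⟩
  intro y hy1 hy2
  have : (σ.symm y).val = 0 := by
    have := Fin.lt_def.mp hy2; omega
  exact Fin.le_def.mpr (by omega)

/-- If `v` is the L-root leaf of a GS ordering starting at `v`, then `v` is not
a cut vertex. -/
lemma rootleaf_not_cut [Fintype V] {G : SimpleGraph V} {σ : Fin (Fintype.card V) ≃ V}
    (hn : 2 ≤ Fintype.card V) (hGS : IsGSOrdering G σ) {v : V}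
    (h0 : (σ.symm v).val = 0) (hL : ∃! w : V, LParent G σ v w) :
    (G.induce {w : V | w ≠ v}).Connected := by
  set u₁ := σ ⟨1, by omega⟩ with hu₁
  have hp1 : σ.symm u₁ = ⟨1, by omega⟩ := Equiv.symm_apply_apply σ _
  have hval1 : (σ.symm u₁).val = 1 := by
    rw [Equiv.symm_apply_apply σ _]
  have hu₁v : u₁ ≠ v := by
    intro h; rw [h] at hval1; omega
  have hvu₁ : LParent G σ v u₁ := first_lparent_second hn hGS h0
  have huniq : ∀ w : V, LParent G σ v w → w = u₁ := by
    intro w hw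
    obtain ⟨w', _, hw'⟩ := hL
    rw [hw' w hw, hw' u₁ hvu₁]
  have hne0 : ∀ w : V, w ≠ v → (σ.symm w).val ≠ 0 := by
    intro w hwv h
    exact hwv (σ.symm.injective (Fin.ext (by rw [h, h0])))
  have key : ∀ n : ℕ, ∀ w : V, ∀ hw : w ≠ v, (σ.symm w).val = n →
      (G.induce {x : V | x ≠ v}).Reachable ⟨u₁, hu₁v⟩ ⟨w, hw⟩ := by
    intro n
    induction n using Nat.strong_induction_on with
    | _ n ih =>
      intro w hw hwn
      obtain ⟨x, hx⟩ := lparent_exists hGS (hne0 w hw)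
      by_cases hxv : x = v
      · subst hxv
        have : w = u₁ := huniq w hx
        subst this
        exact SimpleGraph.Reachable.refl _
      · have hadj : (G.induce {x : V | x ≠ v}).Adj ⟨x, hxv⟩ ⟨w, hw⟩ := by
          simp only [SimpleGraph.comap_adj, Function.Embedding.coe_subtype]
          exact hx.2.1
        have hlt : (σ.symm x).val < n := by
          have := Fin.lt_def.mp hx.2.2.1; omega
        exact (ih _ hlt x hxv rfl).trans hadj.reachable
  rw [SimpleGraph.connected_iff]
  refine ⟨?_, ⟨⟨u₁, hu₁v⟩⟩⟩
  rintro ⟨a, ha⟩ ⟨b, hb⟩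
  exact (key _ a ha rfl).symm.trans (key _ b hb rfl)

/-- If `v` is the L-parent of a vertex at position at least 2 in a DFS ordering
starting at `v`, then `v` is a cut vertex. -/
lemma cut_of_second_child [Fintype V] {G : SimpleGraph V} {σ : Fin (Fintype.card V) ≃ V}
    (hn : 2 ≤ Fintype.card V) (hDFS : IsDFSOrdering G σ) {v : V}
    (h0 : (σ.symm v).val = 0) {w : V} (hw : LParent G σ v w) (hw2 : 2 ≤ (σ.symm w).val) :
    ¬ (G.induce {x : V | x ≠ v}).Connected := by
  intro hcon
  set k := (σ.symm w).val with hk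
  set u₁ := σ ⟨1, by omega⟩ with hu₁
  have hval1 : (σ.symm u₁).val = 1 := by
    rw [Equiv.symm_apply_apply σ _]
  have hu₁v : u₁ ≠ v := by
    intro h; rw [h] at hval1; omega
  have hwv : w ≠ v := by
    intro h; rw [h, h0] at hk; omega
  obtain ⟨p, q, hp, hq, hpq⟩ := walk_crossing
    ((hcon.preconnected ⟨u₁, hu₁v⟩ ⟨w, hwv⟩).some)
    (P := fun x : {x : V // x ∈ {x : V | x ≠ v}} => (σ.symm x.val).val < k)
    (by show (σ.symm u₁).val < k; omega) (by show ¬ (σ.symm w).val < k; omega)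
  have hadj : G.Adj p.val q.val := hpq
  have hpv : p.val ≠ v := p.2
  have hp0 : (σ.symm p.val).val ≠ 0 := by
    intro h
    exact hpv (σ.symm.injective (Fin.ext (by rw [h, h0])))
  have hqk : k ≤ (σ.symm q.val).val := not_lt.mp hq
  -- a neighbour of w strictly between v and w contradicts LParent
  have hmid : ∀ d : V, G.Adj d w → (σ.symm d).val < k → (σ.symm d).val = 0 := by
    intro d hd1 hd2
    have := hw.2.2.2 d hd1 (Fin.lt_def.mpr hd2)
    have := Fin.le_def.mp this
    rw [h0] at this; omega
  rcases eq_or_lt_of_le hqk with heq | hlt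
  · -- q = w, so p is a late neighbour of w
    have : q.val = w := σ.symm.injective (Fin.ext heq.symm)
    rw [this] at hadj
    exact hp0 (hmid p.val hadj hp)
  · -- q after w: apply the 4-point condition
    have hnadj : ¬ G.Adj p.val w := fun h => hp0 (hmid p.val h hp)
    obtain ⟨d, hd1, hd2, hd3⟩ := hDFS.2 p.val w q.val
      (Fin.lt_def.mpr hp) (Fin.lt_def.mpr hlt) hadj hnadj
    have := hmid d hd3 (Fin.lt_def.mp hd2)
    have := Fin.lt_def.mp hd1
    omega

/-- For a connected graph with at least two vertices, the following are
equivalent: (i) `v` is the L-root leaf of some DFS ordering starting with `v`;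
(ii) `v` is the L-root leaf of every DFS ordering starting with `v`;
(iii) `v` is not a cut vertex. -/
theorem stmt1 [Fintype V] (G : SimpleGraph V)
    (hG : G.Connected) (hn : 2 ≤ Fintype.card V) (v : V) :
    List.TFAE [
      (∃ σ : Fin (Fintype.card V) ≃ V, IsDFSOrdering G σ ∧ (σ.symm v).val = 0 ∧
        LRootLeaf G σ v),
      (∀ σ : Fin (Fintype.card V) ≃ V, IsDFSOrdering G σ → (σ.symm v).val = 0 →
        LRootLeaf G σ v),
      ¬ CutVertex G v] := by
  tfae_have 1 → 3 := by
    rintro ⟨σ, hDFS, h0, hL⟩ hcut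
    exact hcut (rootleaf_not_cut hn hDFS.1 h0 hL.2)
  tfae_have 3 → 2 := by
    intro h3 σ hDFS h0
    refine ⟨h0, σ ⟨1, by omega⟩, first_lparent_second hn hDFS.1 h0, ?_⟩
    intro y hy
    by_contra hne
    have h1 : (σ.symm y).val ≠ 1 := by
      intro h
      exact hne (by rw [← Equiv.apply_symm_apply σ y]; congr 1; exact Fin.ext h)
    have h2 : 2 ≤ (σ.symm y).val := by have := hy.1; omega
    exact h3 (cut_of_second_child hn hDFS h0 hy h2)
  tfae_have 2 → 1 := by
    intro h2
    obtain ⟨σ, hDFS, h0⟩ := exists_dfs hG v (by omega)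
    exact ⟨σ, hDFS, h0, h2 σ hDFS h0⟩
  tfae_finish
end

section
/- Let G be a connected finite simple graph with at least 2 vertices and let v be a vertex of G. Then v is the L-root leaf of some GS ordering of G if and only if v is not a cut vertex of G. -/
/-!
If `v` is the L-root leaf of a GS ordering and `w` its unique L-child, then following L-parents
from any vertex `u ≠ v` stays inside `G - v` until it reaches `w`, so `G - v` is connected.
Conversely, if `G - v` is connected and `w` is a neighbour of `v`, list `v` first and then the other
vertices by their distance from `w` in `G - v`. Every vertex after `w` then has an earlier
neighbour other than `v`, so `w` is the only vertex whose L-parent is `v`.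
-/

open SimpleGraph

variable {V : Type*}

namespace SimpleGraph

lemma Connected.exists_adj_dist_lt {H : SimpleGraph V} (hH : H.Connected) {a b : V}
    (hab : b ≠ a) : ∃ c, H.Adj c b ∧ H.dist a c < H.dist a b := by
  obtain ⟨p, hp⟩ := (hH b a).exists_walk_length_eq_dist
  have hp_not_nil : ¬ p.Nil := p.not_nil_of_ne hab
  refine ⟨p.getVert 1, (p.adj_snd hp_not_nil).symm, ?_⟩
  have h_tail : H.dist (p.getVert 1) a ≤ p.tail.length := dist_le p.tail
  have h_len : p.tail.length + 1 = p.length := p.length_tail_add_one hp_not_nil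
  rw [dist_comm, dist_comm (u := a)]
  omega

end SimpleGraph

lemma exists_equiv_fin_lt_of_lt {α : Type*} [Fintype V] [LinearOrder α] (f : V → α) :
    ∃ σ : Fin (Fintype.card V) ≃ V, ∀ a b, f a < f b → σ.symm a < σ.symm b := by
  let e := (Fintype.equivFin V).symm
  refine ⟨(Tuple.sort (f ∘ e)).trans e, fun a b hab => lt_of_not_ge fun hba => ?_⟩
  have hfba := Tuple.monotone_sort (f ∘ e) hba
  simp only [Function.comp_apply, Equiv.symm_trans_apply, Equiv.apply_symm_apply] at hfba
  exact hab.not_ge hfba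

section Orderings

variable [Fintype V] {G : SimpleGraph V} {σ : Fin (Fintype.card V) ≃ V} {u v w : V}

lemma symm_val_eq_zero_of_forall_lt (h : ∀ u, u ≠ v → σ.symm v < σ.symm u) :
    (σ.symm v).val = 0 := by
  by_contra hv
  let u := σ ⟨0, (σ.symm v).pos⟩
  have hu : u ≠ v := fun huv => hv (by simp [← huv, u])
  exact (h u hu).not_ge (by simp [u, Fin.le_def])

lemma exists_lParent (hσ : IsGSOrdering G σ) (hw : (σ.symm w).val ≠ 0) :
    ∃ u, LParent G σ u w := by
  classical
  obtain ⟨x, hxw, hx⟩ := hσ w hw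
  let earlier := Finset.univ.filter fun y => G.Adj y w ∧ σ.symm y < σ.symm w
  obtain ⟨u, hu, hmax⟩ :=
    earlier.exists_max_image (fun y => σ.symm y) ⟨x, by simp [earlier, hx, hxw]⟩
  simp only [earlier, Finset.mem_filter, Finset.mem_univ, true_and] at hu hmax
  exact ⟨u, hw, hu.1, hu.2, fun y hy hyw => hmax y ⟨hy, hyw⟩⟩

lemma lParent_iff_of_symm_val_eq_zero (hv : (σ.symm v).val = 0) :
    LParent G σ v u ↔ G.Adj v u ∧ ∀ z, G.Adj z u → σ.symm z < σ.symm u → z = v := by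
  constructor
  · rintro ⟨-, hvu, -, hlast⟩
    refine ⟨hvu, fun z hz hzu => σ.symm.injective (le_antisymm (hlast z hz hzu) ?_)⟩
    simp [Fin.le_def, hv]
  · rintro ⟨hvu, hfirst⟩
    have hu : σ.symm u ≠ σ.symm v := σ.symm.injective.ne hvu.ne'
    have hu0 : (σ.symm u).val ≠ 0 := fun h => hu (Fin.ext (h.trans hv.symm))
    refine ⟨hu0, hvu, ?_, fun z hz hzu => by rw [hfirst z hz hzu]⟩
    rw [Fin.lt_def, hv]
    omega

lemma isGSOrdering_and_lRootLeaf (hv : (σ.symm v).val = 0) (hvw : G.Adj v w)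
    (hw : ∀ u, u ≠ v → u ≠ w → σ.symm w < σ.symm u)
    (hpred : ∀ u, u ≠ v → u ≠ w → ∃ z ≠ v, G.Adj z u ∧ σ.symm z < σ.symm u) :
    IsGSOrdering G σ ∧ LRootLeaf G σ v := by
  have hne_v : ∀ {u}, (σ.symm u).val ≠ 0 → u ≠ v := by rintro u hu rfl; exact hu hv
  have hvw_lParent : LParent G σ v w := by
    refine (lParent_iff_of_symm_val_eq_zero hv).2 ⟨hvw, fun z hz hzw => ?_⟩
    by_contra hzv
    exact (hw z hzv (ne_of_apply_ne σ.symm hzw.ne)).not_gt hzw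
  refine ⟨fun u hu => ?_, hv, w, hvw_lParent, fun u hu => ?_⟩
  · by_cases huw : u = w
    · exact ⟨v, huw ▸ hvw_lParent.2.2.1, huw ▸ hvw⟩
    · obtain ⟨z, -, hzu, hz⟩ := hpred u (hne_v hu) huw
      exact ⟨z, hz, hzu⟩
  · by_contra huw
    obtain ⟨z, hzv, hzu, hz⟩ := hpred u (hne_v hu.1) huw
    exact hzv (((lParent_iff_of_symm_val_eq_zero hv).1 hu).2 z hzu hz)

lemma connected_induce_ne_of_lRootLeaf (hσ : IsGSOrdering G σ) (hv : LRootLeaf G σ v) :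
    (G.induce {u | u ≠ v}).Connected := by
  obtain ⟨hv0, w, hvw, hw_unique⟩ := hv
  have hwv : w ≠ v := hvw.2.1.ne'
  have reach : ∀ i, ∀ u (hu : u ≠ v), σ.symm u = i →
      (G.induce {u | u ≠ v}).Reachable ⟨w, hwv⟩ ⟨u, hu⟩ := by
    intro i
    induction i using WellFoundedLT.induction with
    | _ i ih =>
      rintro u hu rfl
      have hu0 : (σ.symm u).val ≠ 0 := fun h =>
        hu (σ.symm.injective (Fin.ext (h.trans hv0.symm)))
      obtain ⟨p, hp⟩ := exists_lParent hσ hu0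
      by_cases hpv : p = v
      · subst hpv
        obtain rfl := hw_unique u hp
        rfl
      · exact (ih _ hp.2.2.1 p hpv rfl).trans (Adj.reachable (by simpa using hp.2.1))
  exact (connected_iff _).2 ⟨fun ⟨a, ha⟩ ⟨b, hb⟩ =>
    (reach _ a ha rfl).symm.trans (reach _ b hb rfl), ⟨⟨w, hwv⟩⟩⟩

lemma exists_isGSOrdering_lRootLeaf (hvw : G.Adj v w) (hH : (G.induce {u | u ≠ v}).Connected) :
    ∃ σ : Fin (Fintype.card V) ≃ V, IsGSOrdering G σ ∧ LRootLeaf G σ v := by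
  classical
  set H := G.induce {u | u ≠ v}
  let w' : {u | u ≠ v} := ⟨w, hvw.ne'⟩
  let key : V → ℕ := fun u => if hu : u = v then 0 else H.dist w' ⟨u, hu⟩ + 1
  have key_of_ne : ∀ u (hu : u ≠ v), key u = H.dist w' ⟨u, hu⟩ + 1 := fun u hu => dif_neg hu
  obtain ⟨σ, hσ⟩ := exists_equiv_fin_lt_of_lt key
  refine ⟨σ, isGSOrdering_and_lRootLeaf (symm_val_eq_zero_of_forall_lt fun u hu => hσ _ _ ?_)
    hvw (fun u hu huw => hσ _ _ ?_) (fun u hu huw => ?_)⟩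
  · simp [key, hu]
  · have hne : (⟨u, hu⟩ : {u | u ≠ v}) ≠ w' := fun h => huw (congrArg Subtype.val h)
    have hpos : 0 < H.dist w' ⟨u, hu⟩ := hH.pos_dist_of_ne hne.symm
    rw [key_of_ne u hu, key_of_ne w hvw.ne', show (⟨w, hvw.ne'⟩ : {u | u ≠ v}) = w' from rfl,
      SimpleGraph.dist_self]
    omega
  · have hne : (⟨u, hu⟩ : {u | u ≠ v}) ≠ w' := fun h => huw (congrArg Subtype.val h)
    obtain ⟨⟨z, hzv⟩, hzu, hz⟩ := hH.exists_adj_dist_lt hne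
    refine ⟨z, hzv, by simpa [H] using hzu, hσ _ _ ?_⟩
    rw [key_of_ne z hzv, key_of_ne u hu]
    omega

end Orderings

/-- `v` is the L-root leaf of some GS ordering iff `v` is not a cut vertex. -/
theorem stmt3 [Fintype V] (G : SimpleGraph V)
    (hG : G.Connected) (hn : 2 ≤ Fintype.card V) (v : V) :
    (∃ σ : Fin (Fintype.card V) ≃ V, IsGSOrdering G σ ∧ LRootLeaf G σ v) ↔
      ¬ CutVertex G v := by
  refine ⟨fun ⟨σ, hσ, hv⟩ => not_not.2 (connected_induce_ne_of_lRootLeaf hσ hv), fun hv => ?_⟩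
  have : Nontrivial V := Fintype.one_lt_card_iff_nontrivial.1 hn
  obtain ⟨w, hvw⟩ := hG.preconnected.exists_adj_of_nontrivial v
  exact exists_isGSOrdering_lRootLeaf hvw (not_not.1 hv)
end

section
/- Let G be a connected finite simple graph with at least 2 vertices and let v be a vertex of G. Then v is an L-branch leaf of some GS ordering of G if and only if v is not a cut vertex of G. -/
open SimpleGraph

variable {V : Type*}

/-
If `v` is not the first vertex and is the L-parent of no vertex, then every later vertex `w ≠ v`
has an earlier neighbor other than `v` (otherwise `v` would be its last earlier neighbor), so
following such neighbors leads from `w` back to the first vertex without passing through `v`: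
`G - v` is connected. Conversely, if `G - v` is connected, list its vertices by distance from a
fixed root and put `v` last; this is a GS ordering because `G` is connected, and a last vertex
is the L-parent of nothing.
-/

namespace SimpleGraph

variable {G : SimpleGraph V}

lemma Connected.exists_adj_dist_lt_s4 (hG : G.Connected) {a b : V} (hab : a ≠ b) :
    ∃ c, G.Adj c b ∧ G.dist a c < G.dist a b := by
  obtain ⟨p, hp⟩ := hG.exists_walk_length_eq_dist b a
  have hnil : ¬ p.Nil := p.not_nil_of_ne hab.symm
  refine ⟨p.getVert 1, (p.adj_snd hnil).symm, ?_⟩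
  calc G.dist a (p.getVert 1) = G.dist (p.getVert 1) a := dist_comm
    _ ≤ p.tail.length := dist_le p.tail
    _ < p.length := by rw [← p.length_tail_add_one hnil]; omega
    _ = G.dist a b := hp.trans dist_comm

lemma induce_connected_of_exists_adj_lt {α : Type*} [Preorder α] [WellFoundedLT α] {s : Set V}
    {r : V} (hr : r ∈ s) (f : V → α) (h : ∀ w ∈ s, w ≠ r → ∃ u ∈ s, G.Adj u w ∧ f u < f w) :
    (G.induce s).Connected := by
  have reach (w : V) : ∀ hw : w ∈ s, (G.induce s).Reachable ⟨r, hr⟩ ⟨w, hw⟩ := by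
    induction w using (InvImage.wf f wellFounded_lt).induction with
    | _ w ih =>
      intro hw
      by_cases hwr : w = r
      · subst hwr
        rfl
      obtain ⟨u, hu, huw, hlt⟩ := h w hw hwr
      exact (ih u hlt hu).trans (Adj.reachable (by simpa using huw))
  exact (connected_iff_exists_forall_reachable _).2 ⟨⟨r, hr⟩, fun w => reach w.1 w.2⟩

end SimpleGraph

section Orderings

variable [Fintype V] {G : SimpleGraph V} {σ : Fin (Fintype.card V) ≃ V}

lemma exists_monotone_ordering {α : Type*} [LinearOrder α] (f : V → α) :
    ∃ σ : Fin (Fintype.card V) ≃ V, Monotone (f ∘ σ) :=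
  ⟨(Tuple.sort (f ∘ (Fintype.equivFin V).symm)).trans (Fintype.equivFin V).symm,
    Tuple.monotone_sort (f ∘ (Fintype.equivFin V).symm)⟩

lemma isGSOrdering_of_monotone {α : Type*} [LinearOrder α] {f : V → α} (hσ : Monotone (f ∘ σ))
    {r : V} (hr : ∀ w, f r ≤ f w) (h : ∀ w ≠ r, ∃ u, G.Adj u w ∧ f u < f w) :
    IsGSOrdering G σ := by
  intro w hw
  suffices hwr : w ≠ r by
    obtain ⟨u, huw, hlt⟩ := h w hwr
    exact ⟨u, hσ.reflect_lt (by simpa using hlt), huw⟩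
  rintro rfl
  have : NeZero (Fintype.card V) := ⟨(σ.symm w).pos.ne'⟩
  have hfirst : σ 0 ≠ w := by
    rintro rfl
    simp at hw
  obtain ⟨u, -, hlt⟩ := h (σ 0) hfirst
  have hle : f (σ 0) ≤ f w := by
    simpa using hσ (Fin.zero_le (σ.symm w))
  exact (hlt.trans_le (hle.trans (hr u))).false

lemma exists_adj_ne_of_not_lParent (hσ : IsGSOrdering G σ) {v w : V} (hw : (σ.symm w).val ≠ 0)
    (hvw : ¬ LParent G σ v w) : ∃ u ≠ v, G.Adj u w ∧ σ.symm u < σ.symm w := by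
  by_contra! hall
  obtain ⟨u, hlt, huw⟩ := hσ w hw
  have only_v : ∀ x, G.Adj x w → σ.symm x < σ.symm w → x = v := fun x hx hxlt =>
    by_contra fun hxv => (hall x hxv hx).not_gt hxlt
  obtain rfl := only_v u huw hlt
  exact hvw ⟨hw, huw, hlt, fun x hx hxlt => (only_v x hx hxlt) ▸ le_rfl⟩

lemma not_cutVertex_of_lBranchLeaf (hσ : IsGSOrdering G σ) {v : V} (hv : LBranchLeaf G σ v) :
    ¬ CutVertex G v := by
  obtain ⟨hv0, hleaf⟩ := hv
  have : NeZero (Fintype.card V) := ⟨(σ.symm v).pos.ne'⟩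
  have hrv : σ 0 ≠ v := by
    rintro rfl
    simp at hv0
  refine not_not.2 (induce_connected_of_exists_adj_lt hrv (⇑σ.symm) ?_)
  intro w _ hwr
  have hw0 : (σ.symm w).val ≠ 0 := fun h => hwr (σ.symm_apply_eq.1 (Fin.ext h))
  exact exists_adj_ne_of_not_lParent hσ hw0 (hleaf w)

lemma exists_isGSOrdering_lt_of_connected_induce (hG : G.Connected) {v : V}
    (hGv : (G.induce {w | w ≠ v}).Connected) :
    ∃ σ : Fin (Fintype.card V) ≃ V, IsGSOrdering G σ ∧ ∀ w ≠ v, σ.symm w < σ.symm v := by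
  classical
  obtain ⟨r⟩ := hGv.nonempty
  have hrv : (r : V) ≠ v := r.2
  let f : V → ℕ∞ := fun w =>
    if h : w = v then ⊤ else (G.induce {w | w ≠ v}).dist r ⟨w, h⟩
  have hf_lt (w : V) (hw : w ≠ v) : f w < f v := by simp [f, hw]
  obtain ⟨σ, hσ⟩ := exists_monotone_ordering f
  refine ⟨σ, isGSOrdering_of_monotone hσ (r := r) (fun w => ?_) (fun w hwr => ?_),
    fun w hw => hσ.reflect_lt (by simpa using hf_lt w hw)⟩
  · simp [f, hrv]
  by_cases hwv : w = v
  · subst hwv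
    have : Nontrivial V := nontrivial_of_ne _ _ hrv
    obtain ⟨u, hwu⟩ := hG.preconnected.exists_adj_of_nontrivial w
    exact ⟨u, hwu.symm, hf_lt u hwu.ne'⟩
  · obtain ⟨c, hc, hlt⟩ := hGv.exists_adj_dist_lt_s4 (b := ⟨w, hwv⟩)
      fun h => hwr (congrArg Subtype.val h).symm
    have hcv : (c : V) ≠ v := c.2
    exact ⟨c, by simpa using hc, by simpa [f, hcv, hwv] using hlt⟩

lemma lBranchLeaf_of_forall_lt {u v : V} (huv : u ≠ v) (hlast : ∀ w ≠ v, σ.symm w < σ.symm v) :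
    LBranchLeaf G σ v := by
  refine ⟨fun h => by simpa [Fin.lt_def, h] using hlast u huv, ?_⟩
  rintro w ⟨-, -, hlt, -⟩
  exact (hlast w fun h => (h ▸ hlt).false).asymm hlt

end Orderings

theorem stmt4_general [Fintype V] (G : SimpleGraph V)
    (hG : G.Connected) (v : V) :
    (∃ σ : Fin (Fintype.card V) ≃ V, IsGSOrdering G σ ∧ LBranchLeaf G σ v) ↔
      ¬ CutVertex G v := by
  refine ⟨fun ⟨σ, hσ, hv⟩ => not_cutVertex_of_lBranchLeaf hσ hv, fun hv => ?_⟩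
  have hGv : (G.induce {w | w ≠ v}).Connected := not_not.1 hv
  obtain ⟨σ, hσ, hlast⟩ := exists_isGSOrdering_lt_of_connected_induce hG hGv
  obtain ⟨r⟩ := hGv.nonempty
  exact ⟨σ, hσ, lBranchLeaf_of_forall_lt r.2 hlast⟩

/-- `v` is an L-branch leaf of some GS ordering iff `v` is not a cut vertex. -/
theorem stmt4 [Fintype V] (G : SimpleGraph V)
    (hG : G.Connected) (hn : 2 ≤ Fintype.card V) (v : V) :
    (∃ σ : Fin (Fintype.card V) ≃ V, IsGSOrdering G σ ∧ LBranchLeaf G σ v) ↔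
      ¬ CutVertex G v :=
  stmt4_general G hG v
end

section
/- Let G be a connected finite simple graph with at least 2 vertices and let v be a vertex of G. Then v is an F-branch leaf of some GS ordering of G if and only if v is not a cut vertex of G. -/
open SimpleGraph

variable {V : Type*}

/-- `v` is an F-branch leaf of some GS ordering iff `v` is not a cut vertex. -/
theorem stmt5 [Fintype V] (G : SimpleGraph V)
    (hG : G.Connected) (hn : 2 ≤ Fintype.card V) (v : V) :
    (∃ σ : Fin (Fintype.card V) ≃ V, IsGSOrdering G σ ∧ FBranchLeaf G σ v) ↔
      ¬ CutVertex G v := by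
  classical
  constructor
  · rintro ⟨σ, hGS, hleaf⟩ hcut
    obtain ⟨hv0, hpar⟩ := hleaf
    unfold CutVertex at hcut
    obtain ⟨u0, hu0⟩ := Fintype.exists_ne_of_one_lt_card (by omega) v
    haveI hne : Nonempty ↥{w : V | w ≠ v} := ⟨⟨u0, hu0⟩⟩
    have hpre : ¬ (G.induce {w : V | w ≠ v}).Preconnected := fun hp => hcut ⟨hp⟩
    rw [SimpleGraph.Preconnected] at hpre
    push_neg at hpre
    obtain ⟨a, b, hab⟩ := hpre
    have hpos : 0 < Fintype.card V := by omega
    have hsv : σ ⟨0, hpos⟩ ≠ v := by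
      intro h
      apply hv0
      rw [← h, Equiv.symm_apply_apply]
    have hB : ∃ x : ↥{w : V | w ≠ v},
        ¬ (G.induce {w : V | w ≠ v}).Reachable ⟨σ ⟨0, hpos⟩, hsv⟩ x := by
      by_contra h
      push_neg at h
      exact hab ((h a).symm.trans (h b))
    have hTne : (Finset.univ.filter
        (fun w => ∃ h : w ≠ v,
          ¬ (G.induce {w : V | w ≠ v}).Reachable ⟨σ ⟨0, hpos⟩, hsv⟩ ⟨w, h⟩)).Nonempty := by
      obtain ⟨x, hx⟩ := hB
      refine ⟨x.val, ?_⟩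
      simp only [Finset.mem_filter, Finset.mem_univ, true_and]
      exact ⟨x.2, hx⟩
    obtain ⟨w, hwT, hwmin⟩ := Finset.exists_min_image _ (fun w => σ.symm w) hTne
    simp only [Finset.mem_filter, Finset.mem_univ, true_and] at hwT
    obtain ⟨hwv, hwR⟩ := hwT
    have hwmin' : ∀ u : V, (h : u ≠ v) →
        ¬ (G.induce {w : V | w ≠ v}).Reachable ⟨σ ⟨0, hpos⟩, hsv⟩ ⟨u, h⟩ →
        σ.symm w ≤ σ.symm u := by
      intro u h hr
      apply hwmin
      simp only [Finset.mem_filter, Finset.mem_univ, true_and]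
      exact ⟨h, hr⟩
    have hearly : ∀ u : V, σ.symm u < σ.symm w → G.Adj u w → u = v := by
      intro u hlt hadj
      by_contra huv
      have hur : ¬ (G.induce {w : V | w ≠ v}).Reachable ⟨σ ⟨0, hpos⟩, hsv⟩ ⟨u, huv⟩ := by
        intro hr
        refine hwR (hr.trans (SimpleGraph.Adj.reachable ?_))
        simpa using hadj
      exact absurd (hwmin' u huv hur) (not_le.mpr hlt)
    have hw0 : (σ.symm w).val ≠ 0 := by
      intro h
      apply hwR
      have hws : w = σ ⟨0, hpos⟩ := by
        have h2 : σ.symm w = ⟨0, hpos⟩ := Fin.ext h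
        rw [← h2, Equiv.apply_symm_apply]
      have h3 : (⟨w, hwv⟩ : ↥{w : V | w ≠ v}) = ⟨σ ⟨0, hpos⟩, hsv⟩ := Subtype.ext hws
      rw [h3]
    obtain ⟨u, hult, huadj⟩ := hGS w hw0
    have huv : u = v := hearly u hult huadj
    have huadj' : G.Adj v w := huv ▸ huadj
    have hult' : σ.symm v < σ.symm w := huv ▸ hult
    refine hpar w ⟨hw0, huadj', ?_⟩
    intro z hz
    by_contra hle
    push_neg at hle
    have hzv : z = v := hearly z (hle.trans hult') hz
    rw [hzv] at hle
    exact absurd hle (lt_irrefl _)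
  · intro hcut
    have hH : (G.induce {w : V | w ≠ v}).Connected := not_not.mp hcut
    obtain ⟨s0⟩ : Nonempty ↥{w : V | w ≠ v} := hH.nonempty
    set key : V → ℕ := fun w =>
      if h : w = v then
        (Finset.univ.sup fun u : ↥{w : V | w ≠ v} =>
          (G.induce {w : V | w ≠ v}).dist s0 u) + 1
      else (G.induce {w : V | w ≠ v}).dist s0 ⟨w, h⟩ with hkey
    have hkeyv : ∀ w : V, w ≠ v → key w < key v := by
      intro w hw
      simp only [hkey, dif_neg hw, dif_pos rfl]
      exact Nat.lt_succ_of_le (Finset.le_sup (Finset.mem_univ (⟨w, hw⟩ : ↥{w : V | w ≠ v})))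
    set σ : Fin (Fintype.card V) ≃ V :=
      (Tuple.sort (key ∘ (Fintype.equivFin V).symm)).trans (Fintype.equivFin V).symm with hσ
    have hmono : ∀ i j : Fin (Fintype.card V), i ≤ j → key (σ i) ≤ key (σ j) := by
      intro i j hij
      exact Tuple.monotone_sort (key ∘ (Fintype.equivFin V).symm) hij
    have hmono' : ∀ a b : V, key a < key b → σ.symm a < σ.symm b := by
      intro a b h
      by_contra hc
      push_neg at hc
      have h2 := hmono _ _ hc
      rw [Equiv.apply_symm_apply, Equiv.apply_symm_apply] at h2
      omega
    have hvlast : ∀ w : V, w ≠ v → σ.symm w < σ.symm v := fun w hw =>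
      hmono' w v (hkeyv w hw)
    have hpos : 0 < Fintype.card V := by omega
    have hkey0 : key s0.val = 0 := by
      simp only [hkey, dif_neg s0.2]
      exact SimpleGraph.dist_self
    have hs0 : σ ⟨0, hpos⟩ = s0.val := by
      have h1 : key (σ ⟨0, hpos⟩) ≤ key s0.val := by
        have h2 := hmono ⟨0, hpos⟩ (σ.symm s0.val) (by simp [Fin.le_def])
        rwa [Equiv.apply_symm_apply] at h2
      rw [hkey0] at h1
      have h0 : key (σ ⟨0, hpos⟩) = 0 := Nat.le_zero.mp h1
      have hne0 : σ ⟨0, hpos⟩ ≠ v := by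
        intro h
        have h3 := hkeyv s0.val s0.2
        rw [hkey0, ← h, h0] at h3
        omega
      have hdz : (G.induce {w : V | w ≠ v}).dist s0 ⟨σ ⟨0, hpos⟩, hne0⟩ = 0 := by
        have h4 := h0
        simp only [hkey, dif_neg hne0] at h4
        exact h4
      rcases SimpleGraph.dist_eq_zero_iff_eq_or_not_reachable.mp hdz with h | h
      · exact (congrArg Subtype.val h).symm
      · exact absurd (hH.preconnected s0 ⟨_, hne0⟩) h
    have hGSσ : IsGSOrdering G σ := by
      intro w hw0
      by_cases hwv : w = v
      · obtain ⟨u, hu⟩ : ∃ u, G.Adj u v := by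
          obtain ⟨u0, hu0⟩ := Fintype.exists_ne_of_one_lt_card (by omega) v
          obtain ⟨p⟩ := hG.preconnected v u0
          cases p with
          | nil => exact absurd rfl hu0
          | cons h q => exact ⟨_, h.symm⟩
        subst hwv
        exact ⟨u, hvlast u hu.ne, hu⟩
      · by_cases hws : w = s0.val
        · exfalso
          apply hw0
          rw [hws, ← hs0, Equiv.symm_apply_apply]
        · have hr : (G.induce {w : V | w ≠ v}).Reachable s0 ⟨w, hwv⟩ :=
            hH.preconnected _ _
          have hd : (G.induce {w : V | w ≠ v}).dist s0 ⟨w, hwv⟩ ≠ 0 := by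
            intro h
            rcases SimpleGraph.dist_eq_zero_iff_eq_or_not_reachable.mp h with h | h
            · exact hws (congrArg Subtype.val h).symm
            · exact h hr
          obtain ⟨p, hp⟩ := (hr.symm).exists_walk_length_eq_dist
          have hnn : ¬ p.Nil := by
            rw [SimpleGraph.Walk.nil_iff_length_eq, hp, SimpleGraph.dist_comm]
            exact hd
          obtain ⟨u', hadj, q, hpq⟩ := SimpleGraph.Walk.not_nil_iff.mp hnn
          have hq : q.length + 1 = (G.induce {w : V | w ≠ v}).dist s0 ⟨w, hwv⟩ := by
            have h5 := hp
            rw [hpq] at h5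
            simp only [SimpleGraph.Walk.length_cons] at h5
            rw [SimpleGraph.dist_comm] at h5
            exact h5
          have hdu : (G.induce {w : V | w ≠ v}).dist s0 u' ≤ q.length := by
            rw [SimpleGraph.dist_comm]
            exact SimpleGraph.dist_le q
          have hkeyu : key u'.val < key w := by
            have h6 : key u'.val = (G.induce {w : V | w ≠ v}).dist s0 u' := by
              simp only [hkey, dif_neg u'.2]
            have h7 : key w = (G.induce {w : V | w ≠ v}).dist s0 ⟨w, hwv⟩ := by
              simp only [hkey, dif_neg hwv]
            omega
          refine ⟨u'.val, hmono' _ _ hkeyu, ?_⟩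
          have h8 : G.Adj w u'.val := by simpa using hadj
          exact h8.symm
    refine ⟨σ, hGSσ, ?_, ?_⟩
    · intro h
      have h9 := hvlast s0.val s0.2
      rw [Fin.lt_def, h] at h9
      omega
    · intro w hFP
      obtain ⟨hw0, hadj, hminw⟩ := hFP
      obtain ⟨u, hult, huadj⟩ := hGSσ w hw0
      have h10 := hminw u huadj
      have h11 := hvlast w hadj.ne'
      exact absurd ((h10.trans_lt hult).trans h11) (lt_irrefl _)
end

section
/- Let G be a connected finite simple graph with at least 2 vertices and let v be a vertex of G. Then v is the end-vertex (last vertex) of some GS ordering of G if and only if v is not a cut vertex of G. -/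
open SimpleGraph

variable {V : Type*}

section Aux

open List

variable {W : Type*}

private lemma idxOf_map {β : Type*} [DecidableEq W] [DecidableEq β] {f : W → β}
    (hf : Function.Injective f) (l : List W) (a : W) :
    (l.map f).idxOf (f a) = l.idxOf a := by
  induction l with
  | nil => simp
  | cons b t ih =>
    simp only [List.map_cons]
    by_cases hb : b = a
    · subst hb; simp
    · rw [List.idxOf_cons_ne _ (fun h => hb (hf h)), List.idxOf_cons_ne _ hb, ih]

private lemma walk_boundary {H : SimpleGraph W} {l : List W} :
    ∀ {a b : W}, H.Walk a b → a ∈ l → b ∉ l → ∃ u, u ∉ l ∧ ∃ x ∈ l, H.Adj x u := by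
  intro a b p
  induction p with
  | nil => intro h1 h2; exact absurd h1 h2
  | @cons a c b h q ih =>
    intro h1 h2
    by_cases hc : c ∈ l
    · exact ih hc h2
    · exact ⟨c, hc, a, h1, h⟩

/-- GS property for a list. -/
private def GSlist [DecidableEq W] (H : SimpleGraph W) (l : List W) : Prop :=
  ∀ w ∈ l, l.idxOf w ≠ 0 → ∃ u ∈ l, l.idxOf u < l.idxOf w ∧ H.Adj u w

private lemma gs_extend [DecidableEq W] [Fintype W] {H : SimpleGraph W} (hH : H.Connected) :
    ∀ (n : ℕ) (l : List W), l.Nodup → l ≠ [] → GSlist H l → Fintype.card W ≤ l.length + n →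
      ∃ L : List W, L.Nodup ∧ GSlist H L ∧ ∀ w, w ∈ L := by
  intro n
  induction n with
  | zero =>
    intro l hnd hne hgs hcard
    refine ⟨l, hnd, hgs, ?_⟩
    intro w
    have h1 : l.toFinset.card = l.length := List.toFinset_card_of_nodup hnd
    have h2 : l.toFinset.card ≤ Fintype.card W := Finset.card_le_univ _
    have : l.toFinset = Finset.univ := Finset.eq_univ_of_card _ (by omega)
    have := Finset.eq_univ_iff_forall.1 this w
    simpa using this
  | succ n ih =>
    intro l hnd hne hgs hcard
    by_cases hall : ∀ w, w ∈ l
    · exact ⟨l, hnd, hgs, hall⟩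
    · push_neg at hall
      obtain ⟨w, hw⟩ := hall
      have hhead : l.head hne ∈ l := List.head_mem hne
      obtain ⟨u, hu, x, hx, hadj⟩ :=
        walk_boundary ((hH.preconnected (l.head hne) w).some) hhead hw
      have hnd' : (l ++ [u]).Nodup := by
        simp only [List.nodup_append, List.nodup_cons, List.not_mem_nil, not_false_iff,
          List.nodup_nil, and_true, true_and, hnd]
        exact fun a ha b hb hab => hu (by simp_all)
      have hgs' : GSlist H (l ++ [u]) := by
        intro z hz h0
        rcases List.mem_append.1 hz with hzl | hzu
        · rw [List.idxOf_append_of_mem hzl] at h0 ⊢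
          obtain ⟨u', hu', hlt, ha⟩ := hgs z hzl h0
          exact ⟨u', List.mem_append_left _ hu',
            by rw [List.idxOf_append_of_mem hu']; exact hlt, ha⟩
        · have hz' : z = u := by simpa using hzu
          subst hz'
          refine ⟨x, List.mem_append_left _ hx, ?_, hadj⟩
          rw [List.idxOf_append_of_mem hx, List.idxOf_append_of_notMem hu]
          have := List.idxOf_lt_length_iff.2 hx
          omega
      have hlen : Fintype.card W ≤ (l ++ [u]).length + n := by
        simp only [List.length_append, List.length_singleton]; omega
      exact ih (l ++ [u]) hnd' (by simp) hgs' hlen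

end Aux

/-- `v` is the end-vertex of some GS ordering iff `v` is not a cut vertex. -/
theorem stmt6 [Fintype V] (G : SimpleGraph V)
    (hG : G.Connected) (hn : 2 ≤ Fintype.card V) (v : V) :
    (∃ σ : Fin (Fintype.card V) ≃ V, IsGSOrdering G σ ∧ IsEndVertex σ v) ↔
      ¬ CutVertex G v := by
  classical
  constructor
  · rintro ⟨σ, hσ, hend⟩ hcut
    apply hcut
    rw [SimpleGraph.connected_iff]
    have hv : (σ.symm v).val = Fintype.card V - 1 := hend
    have hpos : (0 : ℕ) < Fintype.card V := by omega
    have h0 : (σ ⟨0, hpos⟩ : V) ≠ v := by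
      intro h
      have h' := congrArg σ.symm h
      rw [Equiv.symm_apply_apply] at h'
      rw [← h'] at hv
      simp at hv
      omega
    refine ⟨?_, ⟨⟨σ ⟨0, hpos⟩, h0⟩⟩⟩
    have key : ∀ n : ℕ, ∀ a : {w : V | w ≠ v}, (σ.symm a.val).val = n →
        (G.induce {w : V | w ≠ v}).Reachable a ⟨σ ⟨0, hpos⟩, h0⟩ := by
      intro n
      induction n using Nat.strong_induction_on with
      | _ n ih =>
        intro a ha
        by_cases hz : (σ.symm a.val).val = 0
        · have h1 : σ.symm a.val = ⟨0, hpos⟩ := Fin.ext hz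
          have h2 : a.val = σ ⟨0, hpos⟩ := by
            conv_lhs => rw [← σ.apply_symm_apply a.val]
            rw [h1]
          have h3 : a = (⟨σ ⟨0, hpos⟩, h0⟩ : {w : V | w ≠ v}) := Subtype.ext h2
          rw [h3]
        · obtain ⟨u, hlt, hadj⟩ := hσ a.val hz
          have hlt' : (σ.symm u).val < (σ.symm a.val).val := hlt
          have huv : u ≠ v := by
            intro h
            subst h
            have := (σ.symm a.val).isLt
            omega
          have hadj' : (G.induce {w : V | w ≠ v}).Adj ⟨u, huv⟩ a := hadj
          have hr := ih (σ.symm u).val (by omega) ⟨u, huv⟩ rfl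
          exact (hadj'.symm.reachable).trans hr
    intro a b
    exact (key _ a rfl).trans (key _ b rfl).symm
  · intro hnc
    rw [CutVertex, not_not] at hnc
    obtain ⟨w₀, hw₀⟩ := Fintype.exists_ne_of_one_lt_card (by omega) v
    have hstart : GSlist (G.induce {w : V | w ≠ v}) [⟨w₀, hw₀⟩] := by
      intro z hz h0
      simp only [List.mem_singleton] at hz
      subst hz
      simp at h0
    obtain ⟨L', hnd', hgs', hall'⟩ := gs_extend hnc (Fintype.card {w : V | w ≠ v})
      [⟨w₀, hw₀⟩] (by simp) (by simp) hstart (by simp)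
    set M : List V := L'.map Subtype.val with hM
    set L : List V := M ++ [v] with hL
    have hndM : M.Nodup := hnd'.map Subtype.val_injective
    have hvM : v ∉ M := by
      intro h
      obtain ⟨⟨x, hx⟩, _, hxe⟩ := List.mem_map.1 h
      exact hx hxe
    have hmemM : ∀ w : V, w ≠ v → w ∈ M := fun w hw =>
      List.mem_map.2 ⟨⟨w, hw⟩, hall' _, rfl⟩
    have hndL : L.Nodup := by
      rw [hL]
      simp only [List.nodup_append, List.nodup_cons, List.not_mem_nil, not_false_iff,
        List.nodup_nil, and_true, true_and, hndM]
      exact fun a ha b hb hab => hvM (by simp_all)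
    have hallL : ∀ w, w ∈ L := by
      intro w
      by_cases hw : w = v
      · subst hw; exact List.mem_append_right _ (by simp)
      · exact List.mem_append_left _ (hmemM w hw)
    have hMne : M ≠ [] := by
      intro h
      have := hmemM w₀ hw₀
      rw [h] at this
      simp at this
    have hMlen : 0 < M.length := List.length_pos_iff.2 hMne
    have hlenL : L.length = Fintype.card V := by
      have h1 : L.toFinset.card = L.length := List.toFinset_card_of_nodup hndL
      have h2 : L.toFinset = Finset.univ := Finset.eq_univ_iff_forall.2 (by simp [hallL])
      rw [← h1, h2, Finset.card_univ]
    have hidxv : L.idxOf v = M.length := by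
      rw [hL, List.idxOf_append_of_notMem hvM]
      simp
    have hidxM : ∀ w, w ∈ M → L.idxOf w = M.idxOf w := fun w hw =>
      List.idxOf_append_of_mem hw
    have hgsL : GSlist G L := by
      intro z hz h0
      by_cases hzv : z = v
      · subst hzv
        obtain ⟨c, hc, x, hx, hadj⟩ := walk_boundary (l := [z])
          ((hG.preconnected z w₀).some) (by simp) (by simp [hw₀])
        simp only [List.mem_singleton] at hc hx
        subst hx
        refine ⟨c, List.mem_append_left _ (hmemM c hc), ?_, hadj.symm⟩
        rw [hidxv, hidxM c (hmemM c hc)]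
        exact List.idxOf_lt_length_iff.2 (hmemM c hc)
      · have hzM : z ∈ M := hmemM z hzv
        rw [hidxM z hzM] at h0 ⊢
        obtain ⟨⟨z', hz'⟩, hz'L, hz'e⟩ := List.mem_map.1 hzM
        have hz2 : z' = z := hz'e
        subst hz2
        have hidz : M.idxOf z' = @List.idxOf _ instBEqOfDecidableEq ⟨z', hz'⟩ L' := by
          rw [hM]
          exact idxOf_map Subtype.val_injective L' ⟨z', hz'⟩
        rw [hidz] at h0
        obtain ⟨⟨u, hu⟩, huL, hult, huadj⟩ := hgs' ⟨z', hz'⟩ hz'L h0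
        have huM : u ∈ M := List.mem_map.2 ⟨⟨u, hu⟩, huL, rfl⟩
        refine ⟨u, List.mem_append_left _ huM, ?_, huadj⟩
        rw [hidxM u huM, hidz]
        have : M.idxOf u = @List.idxOf _ instBEqOfDecidableEq ⟨u, hu⟩ L' := by
          rw [hM]; exact idxOf_map Subtype.val_injective L' ⟨u, hu⟩
        rw [this]
        exact hult
    let e : Fin L.length ≃ V := List.Nodup.getEquivOfForallMemList L hndL hallL
    let σ : Fin (Fintype.card V) ≃ V := (finCongr hlenL.symm).trans e
    have hsymm : ∀ w : V, (σ.symm w).val = L.idxOf w := by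
      intro w
      simp [σ, e, List.Nodup.getEquivOfForallMemList]
    refine ⟨σ, ?_, ?_⟩
    · intro w h0
      rw [hsymm] at h0
      obtain ⟨u, _, hlt, hadj⟩ := hgsL w (hallL w) h0
      refine ⟨u, ?_, hadj⟩
      rw [Fin.lt_def, hsymm, hsymm]
      exact hlt
    · show (σ.symm v).val = Fintype.card V - 1
      rw [hsymm, hidxv]
      have : L.length = M.length + 1 := by simp [hL]
      omega
end

section
/- Let G be a connected finite simple graph with at least 2 vertices and let v be a vertex of G. The following are equivalent: (i) v is the L-root leaf of some LDFS ordering of G; (ii) v is an L-leaf (L-root leaf or L-branch leaf) of some LDFS ordering of G; (iii) v is not a cut vertex of G. -/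
open SimpleGraph

variable {V : Type*}

namespace Stmt7Aux

/-- Crossing lemma: a walk from inside `S` to outside `S` uses an edge leaving `S`. -/
lemma cross {W : Type*} {G : SimpleGraph W} {S : Set W} {u w : W}
    (h : G.Reachable u w) (hu : u ∈ S) (hw : w ∉ S) :
    ∃ a ∈ S, ∃ b, b ∉ S ∧ G.Adj a b := by
  obtain ⟨p⟩ := h
  induction p with
  | nil => exact absurd hu hw
  | @cons x y z hadj p ih =>
    by_cases hy : y ∈ S
    · exact ih hy hw
    · exact ⟨x, hu, y, hy, hadj⟩

section Construction

variable [Fintype V] [DecidableEq V] (G : SimpleGraph V) [DecidableRel G.Adj] (v : V)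

/-- The list of vertices chosen by the LDFS algorithm, starting at `v`, after `i` steps. -/
noncomputable def chain : ℕ → List V
  | 0 => [v]
  | (i + 1) =>
      let L := chain i
      let U : Finset V := Finset.univ.filter (fun w => w ∉ L)
      if h : U.Nonempty then
        L ++ [(Finset.exists_max_image U (fun w =>
          toColex ((Finset.range L.length).filter
            (fun j => G.Adj (L.getD j v) w))) h).choose]
      else L ++ [v]

/-- The vertex chosen at step `i`. -/
noncomputable def fvert (i : ℕ) : V := (chain G v i).getD i v

lemma chain_succ (i : ℕ) : ∃ x, chain G v (i + 1) = chain G v i ++ [x] := by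
  rw [chain]
  split
  · exact ⟨_, rfl⟩
  · exact ⟨v, rfl⟩

lemma chain_length (i : ℕ) : (chain G v i).length = i + 1 := by
  induction i with
  | zero => rfl
  | succ i ih =>
    obtain ⟨x, hx⟩ := chain_succ G v i
    simp [hx, ih]

lemma getD_chain {i j : ℕ} (h : j ≤ i) : (chain G v i).getD j v = fvert G v j := by
  induction i with
  | zero => interval_cases j; rfl
  | succ i ih =>
    obtain ⟨x, hx⟩ := chain_succ G v i
    rcases Nat.lt_or_ge j (i + 1) with hj | hj
    · rw [hx, List.getD_append _ _ _ _ (by rw [chain_length]; exact hj), ih (by omega)]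
    · have : j = i + 1 := by omega
      subst this; rfl

lemma chain_succ_eq (i : ℕ) :
    chain G v (i + 1) = chain G v i ++ [fvert G v (i + 1)] := by
  obtain ⟨x, hx⟩ := chain_succ G v i
  have : fvert G v (i + 1) = x := by
    rw [fvert, hx, List.getD_append_right _ _ _ _ (by rw [chain_length])]
    simp [chain_length]
  rw [this, hx]

lemma mem_chain {w : V} {i : ℕ} : w ∈ chain G v i ↔ ∃ j, j ≤ i ∧ fvert G v j = w := by
  induction i with
  | zero =>
    simp only [chain, List.mem_singleton]
    constructor
    · rintro rfl; exact ⟨0, le_refl _, rfl⟩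
    · rintro ⟨j, hj, rfl⟩; interval_cases j; rfl
  | succ i ih =>
    rw [chain_succ_eq, List.mem_append, List.mem_singleton, ih]
    constructor
    · rintro (⟨j, hj, rfl⟩ | rfl)
      · exact ⟨j, by omega, rfl⟩
      · exact ⟨i + 1, le_refl _, rfl⟩
    · rintro ⟨j, hj, rfl⟩
      rcases Nat.lt_or_ge j (i + 1) with hj' | hj'
      · exact Or.inl ⟨j, by omega, rfl⟩
      · have : j = i + 1 := by omega
        subst this; exact Or.inr rfl

lemma fvert_zero : fvert G v 0 = v := rfl

/-- The label of `w` at time `i` : the set of indices `j < i` with `fvert j` adjacent to `w`. -/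
noncomputable def lab (i : ℕ) (w : V) : Finset ℕ :=
  (Finset.range i).filter (fun j => G.Adj (fvert G v j) w)

lemma fvert_spec (i : ℕ) (hU : ∃ w, w ∉ chain G v i) :
    fvert G v (i + 1) ∉ chain G v i ∧
    ∀ w, w ∉ chain G v i →
      toColex (lab G v (i + 1) w) ≤ toColex (lab G v (i + 1) (fvert G v (i + 1))) := by
  classical
  set L := chain G v i with hL
  set U : Finset V := Finset.univ.filter (fun w => w ∉ L) with hUdef
  have hUne : U.Nonempty := by
    obtain ⟨w, hw⟩ := hU
    exact ⟨w, by simp [hUdef, hw]⟩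
  set key : V → Colex (Finset ℕ) := fun w =>
    toColex ((Finset.range L.length).filter (fun j => G.Adj (L.getD j v) w)) with hkey
  have hch : chain G v (i + 1) = L ++ [(Finset.exists_max_image U key hUne).choose] := by
    rw [chain]
    rw [dif_pos hUne]
  have hfv : fvert G v (i + 1) = (Finset.exists_max_image U key hUne).choose := by
    rw [fvert, hch, List.getD_append_right _ _ _ _ (by rw [chain_length])]
    simp [chain_length, hL]
  obtain ⟨hmem, hmax⟩ := (Finset.exists_max_image U key hUne).choose_spec
  have hkey_eq : ∀ w, key w = toColex (lab G v (i + 1) w) := by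
    intro w
    simp only [hkey, lab]
    congr 1
    rw [hL, chain_length]
    refine Finset.filter_congr fun j hj => ?_
    rw [Finset.mem_range] at hj
    rw [getD_chain G v (by omega : j ≤ i)]
  constructor
  · rw [hfv]
    simpa [hUdef] using hmem
  · intro w hw
    have hwU : w ∈ U := by simp [hUdef, hw]
    have := hmax w hwU
    rwa [hkey_eq, hkey_eq, ← hfv] at this

lemma exists_not_mem (i : ℕ) (hi : i + 1 < Fintype.card V) :
    ∃ w, w ∉ chain G v i := by
  by_contra h
  push_neg at h
  have hsub : (Finset.univ : Finset V) ⊆ (chain G v i).toFinset := by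
    intro w _
    rw [List.mem_toFinset]
    exact h w
  have := Finset.card_le_card hsub
  have h2 := (chain G v i).toFinset_card_le
  rw [chain_length] at h2
  simp only [Finset.card_univ] at this
  omega

lemma fvert_inj {j i : ℕ} (hji : j < i) (hin : i < Fintype.card V) :
    fvert G v j ≠ fvert G v i := by
  obtain ⟨k, rfl⟩ : ∃ k, i = k + 1 := ⟨i - 1, by omega⟩
  have hspec := fvert_spec G v k (exists_not_mem G v k hin)
  intro heq
  exact hspec.1 ((mem_chain G v).mpr ⟨j, by omega, heq⟩)

lemma lab_nonempty (hG : G.Connected) {i : ℕ} (h0 : 0 < i) (hin : i < Fintype.card V) :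
    (lab G v i (fvert G v i)).Nonempty := by
  obtain ⟨k, rfl⟩ : ∃ k, i = k + 1 := ⟨i - 1, by omega⟩
  have hspec := fvert_spec G v k (exists_not_mem G v k hin)
  by_contra hemp
  rw [Finset.not_nonempty_iff_eq_empty] at hemp
  have hv : v ∈ {u | u ∈ chain G v k} := (mem_chain G v).mpr ⟨0, by omega, fvert_zero G v⟩
  have hw : fvert G v (k + 1) ∉ {u | u ∈ chain G v k} := hspec.1
  obtain ⟨a, ha, b, hb, hab⟩ := cross (hG.preconnected v (fvert G v (k + 1))) hv hw
  obtain ⟨j, hj, hje⟩ := (mem_chain G v).mp ha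
  have hjb : j ∈ lab G v (k + 1) b :=
    Finset.mem_filter.mpr ⟨Finset.mem_range.mpr (by omega), hje ▸ hab⟩
  have hle := hspec.2 b hb
  rw [hemp] at hle
  have hbot : toColex (lab G v (k + 1) b) = toColex (∅ : Finset ℕ) :=
    le_antisymm (by simpa using hle) (by simp [Finset.Colex.toColex_empty])
  rw [toColex_inj] at hbot
  rw [hbot] at hjb
  exact absurd hjb (Finset.notMem_empty j)

lemma exists_later_nbr (hvc : (G.induce {w : V | w ≠ v}).Connected) {i : ℕ}
    (h2 : 2 ≤ i) (hin : i < Fintype.card V) :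
    ∃ j, 1 ≤ j ∧ j < i ∧ G.Adj (fvert G v j) (fvert G v i) := by
  obtain ⟨k, rfl⟩ : ∃ k, i = k + 1 := ⟨i - 1, by omega⟩
  have hk1 : 1 ≤ k := by omega
  have hspec := fvert_spec G v k (exists_not_mem G v k hin)
  have h1v : fvert G v 1 ∈ {w : V | w ≠ v} := by
    have := fvert_inj G v (by omega : 0 < 1) (by omega : 1 < Fintype.card V)
    rw [fvert_zero] at this
    exact this.symm
  have hwv : fvert G v (k + 1) ∈ {w : V | w ≠ v} := by
    have := fvert_inj G v (by omega : 0 < k + 1) hin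
    rw [fvert_zero] at this
    exact this.symm
  set S : Set {x : V // x ∈ {w : V | w ≠ v}} :=
    {u | ∃ j, 1 ≤ j ∧ j ≤ k ∧ fvert G v j = u.1} with hS
  have hu : (⟨fvert G v 1, h1v⟩ : {x : V // x ∈ {w : V | w ≠ v}}) ∈ S := ⟨1, le_refl _, hk1, rfl⟩
  have hw : (⟨fvert G v (k + 1), hwv⟩ : {x : V // x ∈ {w : V | w ≠ v}}) ∉ S := by
    rintro ⟨j, hj1, hjk, hje⟩
    exact fvert_inj G v (by omega : j < k + 1) hin hje
  obtain ⟨a, ha, b, hb, hab⟩ := cross (hvc.preconnected _ _) hu hw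
  have hab' : G.Adj a.1 b.1 := hab
  obtain ⟨j, hj1, hjk, hja⟩ := ha
  have hbc : b.1 ∉ chain G v k := by
    intro hmem
    obtain ⟨j', hj', hje'⟩ := (mem_chain G v).mp hmem
    rcases Nat.eq_zero_or_pos j' with rfl | hj'pos
    · rw [fvert_zero] at hje'
      exact b.2 hje'.symm
    · exact hb ⟨j', hj'pos, hj', hje'⟩
  have hle := hspec.2 b.1 hbc
  have hjb : j ∈ lab G v (k + 1) b.1 :=
    Finset.mem_filter.mpr ⟨Finset.mem_range.mpr (by omega), hja ▸ hab'⟩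
  by_cases hjt : j ∈ lab G v (k + 1) (fvert G v (k + 1))
  · obtain ⟨hjr, hadj⟩ := Finset.mem_filter.mp hjt
    exact ⟨j, hj1, Finset.mem_range.mp hjr, hadj⟩
  · obtain ⟨m, hm, -, hjm⟩ := Finset.Colex.toColex_le_toColex.mp hle hjb hjt
    obtain ⟨hmr, hadj⟩ := Finset.mem_filter.mp hm
    exact ⟨m, by omega, Finset.mem_range.mp hmr, hadj⟩

lemma four_point {ia ib ic : ℕ} (hab : ia < ib) (hbc : ib < ic) (hcn : ic < Fintype.card V)
    (hac : G.Adj (fvert G v ia) (fvert G v ic))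
    (hnab : ¬ G.Adj (fvert G v ia) (fvert G v ib)) :
    ∃ m, ia < m ∧ m < ib ∧ G.Adj (fvert G v m) (fvert G v ib) ∧
      ¬ G.Adj (fvert G v m) (fvert G v ic) := by
  obtain ⟨k, rfl⟩ : ∃ k, ib = k + 1 := ⟨ib - 1, by omega⟩
  have hspec := fvert_spec G v k (exists_not_mem G v k (by omega))
  have hcnot : fvert G v ic ∉ chain G v k := by
    intro h
    obtain ⟨j, hj, hje⟩ := (mem_chain G v).mp h
    exact fvert_inj G v (by omega : j < ic) hcn hje
  have hle := hspec.2 _ hcnot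
  have hiac : ia ∈ lab G v (k + 1) (fvert G v ic) :=
    Finset.mem_filter.mpr ⟨Finset.mem_range.mpr (by omega), hac⟩
  have hianb : ia ∉ lab G v (k + 1) (fvert G v (k + 1)) := by
    intro h
    exact hnab (Finset.mem_filter.mp h).2
  have hne : toColex (lab G v (k + 1) (fvert G v ic)) ≠
      toColex (lab G v (k + 1) (fvert G v (k + 1))) := by
    intro h
    rw [toColex_inj] at h
    exact hianb (h ▸ hiac)
  have hlt := hle.lt_of_ne hne
  rw [Finset.Colex.toColex_lt_toColex_iff_exists_forall_lt] at hlt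
  obtain ⟨m, hmb, hmnc, hall⟩ := hlt
  have hiam : ia < m := hall ia hiac hianb
  obtain ⟨hmr, hadj⟩ := Finset.mem_filter.mp hmb
  refine ⟨m, hiam, Finset.mem_range.mp hmr, hadj, fun h => ?_⟩
  exact hmnc (Finset.mem_filter.mpr ⟨hmr, h⟩)

end Construction

end Stmt7Aux

/-- The following are equivalent: (i) `v` is the L-root leaf of some LDFS
ordering; (ii) `v` is an L-leaf of some LDFS ordering; (iii) `v` is not a cut vertex. -/
theorem stmt7 [Fintype V] (G : SimpleGraph V)
    (hG : G.Connected) (hn : 2 ≤ Fintype.card V) (v : V) :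
    List.TFAE [
      (∃ σ : Fin (Fintype.card V) ≃ V, IsLDFSOrdering G σ ∧ LRootLeaf G σ v),
      (∃ σ : Fin (Fintype.card V) ≃ V, IsLDFSOrdering G σ ∧ LLeaf G σ v),
      ¬ CutVertex G v] := by
  classical
  tfae_have 1 → 2 := by
    rintro ⟨σ, h1, h2⟩
    exact ⟨σ, h1, Or.inl h2⟩
  tfae_have 2 → 3 := by
    rintro ⟨σ, hLDFS, hleaf⟩ hcut
    have hGS := hLDFS.1
    have hne : Nonempty {u : V // u ∈ {w : V | w ≠ v}} := by
      obtain ⟨u, hu⟩ := Fintype.exists_ne_of_one_lt_card (by omega) v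
      exact ⟨⟨u, hu⟩⟩
    haveI := hne
    have hnp : ¬ (G.induce {w : V | w ≠ v}).Preconnected := fun hp =>
      hcut (SimpleGraph.Connected.mk hp)
    simp only [SimpleGraph.Preconnected, not_forall] at hnp
    obtain ⟨x, y, hxy⟩ := hnp
    -- minimal vertex of the reachability class of `x` in `G - v`
    have key : ∀ x : {u : V // u ∈ {w : V | w ≠ v}}, ∃ (w : V) (hw : w ∈ {w : V | w ≠ v}),
        (G.induce {w : V | w ≠ v}).Reachable ⟨w, hw⟩ x ∧
        ((σ.symm w).val ≠ 0 → LParent G σ v w) := by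
      intro x
      set C : Finset V := Finset.univ.filter
        (fun u => ∃ h : u ∈ {w : V | w ≠ v}, (G.induce {w : V | w ≠ v}).Reachable ⟨u, h⟩ x)
        with hC
      have hxC : x.1 ∈ C := by
        simp only [hC, Finset.mem_filter, Finset.mem_univ, true_and]
        exact ⟨x.2, by rw [Subtype.coe_eta]⟩
      obtain ⟨w, hwC, hwmin⟩ := Finset.exists_min_image C (fun u => σ.symm u) ⟨x.1, hxC⟩
      simp only [hC, Finset.mem_filter, Finset.mem_univ, true_and] at hwC
      obtain ⟨hw, hreach⟩ := hwC
      refine ⟨w, hw, hreach, fun h0 => ?_⟩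
      have hnbr : ∀ z : V, G.Adj z w → σ.symm w ≤ σ.symm z ∨ z = v := by
        intro z hz
        by_cases hzv : z = v
        · exact Or.inr hzv
        · left
          apply hwmin
          simp only [hC, Finset.mem_filter, Finset.mem_univ, true_and]
          exact ⟨hzv, ((show (G.induce {w : V | w ≠ v}).Adj ⟨z, hzv⟩ ⟨w, hw⟩
            from hz).reachable).trans hreach⟩
      obtain ⟨u, hult, huadj⟩ := hGS w h0
      have huv : u = v := by
        rcases hnbr u huadj with h | h
        · exact absurd hult (not_lt.mpr h)
        · exact h
      subst huv
      refine ⟨h0, huadj, hult, fun z hz hzlt => ?_⟩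
      rcases hnbr z hz with h | h
      · exact absurd hzlt (not_lt.mpr h)
      · exact le_of_eq (congrArg σ.symm h)
    obtain ⟨w1, hw1v, hr1, hp1⟩ := key x
    obtain ⟨w2, hw2v, hr2, hp2⟩ := key y
    have hw12 : w1 ≠ w2 := by
      rintro rfl
      exact hxy (hr1.symm.trans (by rwa [show (⟨w1, hw1v⟩ : {u : V // u ∈ {w : V | w ≠ v}}) =
        ⟨w1, hw2v⟩ from rfl] at hr2))
    rcases hleaf with ⟨h0, w0, hw0, huniq⟩ | ⟨h0, hnone⟩
    · -- L-root leaf case : v is the first vertex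
      have hpos : ∀ w : V, w ≠ v → (σ.symm w).val ≠ 0 := by
        intro w hwv hw0'
        apply hwv
        have : σ.symm w = σ.symm v := Fin.ext (by rw [hw0', h0])
        exact σ.symm.injective this
      have e1 : w1 = w0 := huniq w1 (hp1 (hpos w1 hw1v))
      have e2 : w2 = w0 := huniq w2 (hp2 (hpos w2 hw2v))
      exact hw12 (e1.trans e2.symm)
    · -- L-branch leaf case
      by_cases h1 : (σ.symm w1).val = 0
      · have h2 : (σ.symm w2).val ≠ 0 := by
          intro h2'
          exact hw12 (σ.symm.injective (Fin.ext (by rw [h1, h2'])))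
        exact hnone w2 (hp2 h2)
      · exact hnone w1 (hp1 h1)
  tfae_have 3 → 1 := by
    intro hnc
    have hvc : (G.induce {w : V | w ≠ v}).Connected := not_not.mp hnc
    letI : DecidableEq V := Classical.decEq V
    letI : DecidableRel G.Adj := Classical.decRel _
    set n := Fintype.card V with hn'
    have hg : Function.Injective (fun i : Fin n => Stmt7Aux.fvert G v i.val) := by
      intro i j hij
      by_contra hne
      rcases lt_trichotomy i j with h | h | h
      · exact Stmt7Aux.fvert_inj G v h j.isLt hij
      · exact hne h
      · exact Stmt7Aux.fvert_inj G v h i.isLt hij.symm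
    have hbij := (Fintype.bijective_iff_injective_and_card _).mpr ⟨hg, by simp [hn']⟩
    set σ : Fin n ≃ V := Equiv.ofBijective _ hbij with hσdef
    have hsymm : ∀ w : V, Stmt7Aux.fvert G v (σ.symm w).val = w := fun w => σ.apply_symm_apply w
    have hsymm2 : ∀ (i : ℕ) (hi : i < n), (σ.symm (Stmt7Aux.fvert G v i)).val = i := by
      intro i hi
      have : σ.symm (σ ⟨i, hi⟩) = ⟨i, hi⟩ := σ.symm_apply_apply _
      exact congrArg Fin.val this
    have hGS : IsGSOrdering G σ := by
      intro w hw0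
      obtain ⟨j, hj⟩ := Stmt7Aux.lab_nonempty G v hG (i := (σ.symm w).val)
        (Nat.pos_of_ne_zero hw0) (σ.symm w).isLt
      rw [Stmt7Aux.lab, Finset.mem_filter, Finset.mem_range] at hj
      obtain ⟨hjlt, hjadj⟩ := hj
      refine ⟨Stmt7Aux.fvert G v j, ?_, ?_⟩
      · rw [Fin.lt_def, hsymm2 j (hjlt.trans (σ.symm w).isLt)]
        exact hjlt
      · rwa [hsymm w] at hjadj
    refine ⟨σ, ⟨hGS, ?_⟩, ?_, ?_⟩
    · -- four-point LDFS condition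
      intro a b c h1 h2 hac hnab
      rw [Fin.lt_def] at h1 h2
      rw [← hsymm a, ← hsymm c] at hac
      rw [← hsymm a, ← hsymm b] at hnab
      obtain ⟨m, hm1, hm2, hmadj, hmnadj⟩ :=
        Stmt7Aux.four_point G v h1 h2 (σ.symm c).isLt hac hnab
      refine ⟨Stmt7Aux.fvert G v m, ?_, ?_, ?_, ?_⟩
      · rw [Fin.lt_def, hsymm2 m (hm2.trans (σ.symm b).isLt)]; exact hm1
      · rw [Fin.lt_def, hsymm2 m (hm2.trans (σ.symm b).isLt)]; exact hm2
      · rwa [hsymm b] at hmadj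
      · rwa [hsymm c] at hmnadj
    · -- v is at position 0
      have := hsymm2 0 (by omega)
      rwa [Stmt7Aux.fvert_zero] at this
    · -- v is the L-parent of exactly one vertex
      have h1n : (1 : ℕ) < n := by omega
      have hpos1 : (σ.symm (Stmt7Aux.fvert G v 1)).val = 1 := hsymm2 1 h1n
      have hposv : (σ.symm v).val = 0 := by
        have := hsymm2 0 (by omega)
        rwa [Stmt7Aux.fvert_zero] at this
      have hadj01 : G.Adj v (Stmt7Aux.fvert G v 1) := by
        obtain ⟨j, hj⟩ := Stmt7Aux.lab_nonempty G v hG (i := 1) (by omega) h1n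
        rw [Stmt7Aux.lab, Finset.mem_filter, Finset.mem_range] at hj
        obtain ⟨hjlt, hjadj⟩ := hj
        interval_cases j
        rwa [Stmt7Aux.fvert_zero] at hjadj
      refine ⟨Stmt7Aux.fvert G v 1, ⟨by rw [hpos1]; omega, hadj01, ?_, ?_⟩, ?_⟩
      · rw [Fin.lt_def, hpos1, hposv]; omega
      · intro z hz hzlt
        rw [Fin.lt_def, hpos1] at hzlt
        rw [Fin.le_def, hposv]
        omega
      · intro w hw
        obtain ⟨hw0, hwadj, hwlt, hwlast⟩ := hw
        by_contra hne
        have hi2 : 2 ≤ (σ.symm w).val := by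
          rcases Nat.lt_or_ge (σ.symm w).val 2 with h | h
          · exfalso
            have : (σ.symm w).val = 1 := by omega
            apply hne
            rw [← hsymm w, this]
          · exact h
        obtain ⟨j, hj1, hj2, hjadj⟩ :=
          Stmt7Aux.exists_later_nbr G v hvc hi2 (σ.symm w).isLt
        rw [hsymm w] at hjadj
        have hjpos : (σ.symm (Stmt7Aux.fvert G v j)).val = j :=
          hsymm2 j (hj2.trans (σ.symm w).isLt)
        have := hwlast (Stmt7Aux.fvert G v j) hjadj (by rw [Fin.lt_def, hjpos]; exact hj2)
        rw [Fin.le_def, hjpos, hposv] at this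
        omega
  tfae_finish
end

section
/- Let G be a connected finite simple graph with at least 2 vertices and let v be a vertex of G. The following are equivalent: (i) v is the L-root leaf of some MNS ordering of G; (ii) v is an L-leaf (L-root leaf or L-branch leaf) of some MNS ordering of G; (iii) v is not a cut vertex of G. -/
open SimpleGraph

variable {V : Type*}

section StmtEightAux

open Classical in
private lemma walk_cross8 {W : Type*} {H : SimpleGraph W} (Q : W → Prop) :
    ∀ {x y : W}, H.Walk x y → Q x → ¬ Q y → ∃ p q, H.Adj p q ∧ Q p ∧ ¬ Q q := by
  intro x y w
  induction w with
  | nil => intro h1 h2; exact absurd h1 h2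
  | @cons u u' y h p ih =>
    intro hx hy
    by_cases hq : Q u'
    · exact ih hq hy
    · exact ⟨u, u', h, hx, hq⟩

/-- The property of the next vertex picked by our tie-broken MNS. -/
def PickP {V : Type*} (G : SimpleGraph V) (v : V) (l : List V) (x : V) : Prop :=
  x ∉ l ∧ (∃ u ∈ l, G.Adj u x) ∧
    (∀ z, z ∉ l → (∀ u ∈ l, G.Adj u x → G.Adj u z) → ∀ u ∈ l, G.Adj u z → G.Adj u x) ∧
    ((∃ u ∈ l, u ≠ v) → ∃ u ∈ l, u ≠ v ∧ G.Adj u x)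

private lemma exists_pickP {V : Type*} [Fintype V] (G : SimpleGraph V) (v : V)
    (hG : G.Connected) (hH : (G.induce {w : V | w ≠ v}).Connected) (l : List V)
    (hv : v ∈ l) (hs : ∃ s, s ∉ l) : ∃ x, PickP G v l x := by
  classical
  obtain ⟨s, hsl⟩ := hs
  have key : ∃ y p, y ∉ l ∧ p ∈ l ∧ G.Adj p y ∧ ((∃ u ∈ l, u ≠ v) → p ≠ v) := by
    by_cases ha : ∃ a ∈ l, a ≠ v
    · obtain ⟨a, hal, hav⟩ := ha
      have hsv : s ≠ v := fun h => hsl (h ▸ hv)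
      obtain ⟨w⟩ := hH.preconnected ⟨a, hav⟩ ⟨s, hsv⟩
      obtain ⟨p, q, hadj, hp, hq⟩ :=
        walk_cross8 (fun z : {w : V | w ≠ v} => z.val ∈ l) w hal hsl
      exact ⟨q.val, p.val, hq, hp, by simpa using hadj, fun _ => p.prop⟩
    · obtain ⟨w⟩ := hG.preconnected v s
      obtain ⟨p, q, hadj, hp, hq⟩ := walk_cross8 (fun z : V => z ∈ l) w hv hsl
      exact ⟨q, p, hq, hp, hadj, fun h => absurd h ha⟩
  obtain ⟨y, p, hy, hpl, hpy, hpv⟩ := key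
  set N : V → Finset V := fun x => Finset.univ.filter fun u => u ∈ l ∧ G.Adj u x with hN
  have hNmem : ∀ x u : V, u ∈ N x ↔ u ∈ l ∧ G.Adj u x := by intro x u; simp [hN]
  set C : Finset V := Finset.univ.filter fun x => x ∉ l ∧ N y ⊆ N x with hC
  have hyC : y ∈ C := by simp [hC, hy]
  obtain ⟨x, hxC, hmax⟩ := C.exists_max_image (fun x => (N x).card) ⟨y, hyC⟩
  rw [hC, Finset.mem_filter] at hxC
  obtain ⟨-, hxl, hyx⟩ := hxC
  have hpx : p ∈ l ∧ G.Adj p x := (hNmem x p).1 (hyx ((hNmem y p).2 ⟨hpl, hpy⟩))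
  refine ⟨x, hxl, ⟨p, hpx.1, hpx.2⟩, ?_, ?_⟩
  · intro z hz hsub u hul huz
    have hxz : N x ⊆ N z := by
      intro u hu; rw [hNmem] at hu ⊢; exact ⟨hu.1, hsub u hu.1 hu.2⟩
    have hzC : z ∈ C := by
      rw [hC, Finset.mem_filter]; exact ⟨Finset.mem_univ _, hz, hyx.trans hxz⟩
    have heq : N x = N z := Finset.eq_of_subset_of_card_le hxz (hmax z hzC)
    have : u ∈ N x := heq ▸ (hNmem z u).2 ⟨hul, huz⟩
    exact ((hNmem x u).1 this).2
  · intro h; exact ⟨p, hpx.1, hpv h, hpx.2⟩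

open Classical in
/-- One step of the greedy MNS construction. -/
noncomputable def extendL {V : Type*} (G : SimpleGraph V) (v : V) (l : List V) : List V :=
  if h : ∃ x, PickP G v l x then l ++ [h.choose] else l

/-- The greedy MNS vertex list. -/
noncomputable def chainL {V : Type*} (G : SimpleGraph V) (v : V) : ℕ → List V
  | 0 => [v]
  | k + 1 => extendL G v (chainL G v k)

private lemma chainL_prefix_succ {V : Type*} (G : SimpleGraph V) (v : V) (k : ℕ) :
    chainL G v k <+: chainL G v (k + 1) := by
  show chainL G v k <+: extendL G v (chainL G v k)
  unfold extendL
  split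
  · exact List.prefix_append _ _
  · exact List.prefix_refl _

private lemma chainL_prefix {V : Type*} (G : SimpleGraph V) (v : V) {k m : ℕ} (h : k ≤ m) :
    chainL G v k <+: chainL G v m := by
  induction m with
  | zero => rw [Nat.le_zero.mp h]
  | succ m ih =>
    rcases Nat.lt_or_ge k (m + 1) with h' | h'
    · exact (ih (by omega)).trans (chainL_prefix_succ G v m)
    · have : k = m + 1 := by omega
      rw [this]

private lemma mem_chainL {V : Type*} (G : SimpleGraph V) (v : V) (k : ℕ) : v ∈ chainL G v k :=
  (chainL_prefix G v (Nat.zero_le k)).subset (by simp [chainL])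

private lemma chainL_len {V : Type*} [Fintype V] (G : SimpleGraph V) (v : V)
    (hG : G.Connected) (hH : (G.induce {w : V | w ≠ v}).Connected) :
    ∀ k, k + 1 ≤ Fintype.card V →
      (chainL G v k).Nodup ∧ (chainL G v k).length = k + 1 := by
  intro k
  induction k with
  | zero => intro _; simp [chainL]
  | succ k ih =>
    intro hk
    classical
    obtain ⟨hnd, hlen⟩ := ih (by omega)
    have hex : ∃ s, s ∉ chainL G v k := by
      by_contra h
      push_neg at h
      have h1 : (Finset.univ : Finset V) ⊆ (chainL G v k).toFinset :=
        fun x _ => List.mem_toFinset.2 (h x)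
      have h2 := (Finset.card_le_card h1).trans (List.toFinset_card_le (chainL G v k))
      rw [Finset.card_univ] at h2
      omega
    have hp : ∃ x, PickP G v (chainL G v k) x :=
      exists_pickP G v hG hH _ (mem_chainL G v k) hex
    have hstep : chainL G v (k + 1) = chainL G v k ++ [hp.choose] := by
      show extendL G v (chainL G v k) = _
      rw [extendL, dif_pos hp]
    rw [hstep]
    constructor
    · simp only [List.nodup_append, List.nodup_singleton, true_and]
      exact ⟨hnd, by simpa using fun a (ha : a ∈ chainL G v k) (hax : a = hp.choose) => hp.choose_spec.1 (hax ▸ ha)⟩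
    · simp [hlen]

private lemma chainL_step {V : Type*} [Fintype V] (G : SimpleGraph V) (v : V)
    (hG : G.Connected) (hH : (G.induce {w : V | w ≠ v}).Connected) (k : ℕ)
    (hk : k + 2 ≤ Fintype.card V) :
    ∃ x, PickP G v (chainL G v k) x ∧ chainL G v (k + 1) = chainL G v k ++ [x] := by
  classical
  obtain ⟨hnd, hlen⟩ := chainL_len G v hG hH k (by omega)
  have hex : ∃ s, s ∉ chainL G v k := by
    by_contra h
    push_neg at h
    have h1 : (Finset.univ : Finset V) ⊆ (chainL G v k).toFinset :=
      fun x _ => List.mem_toFinset.2 (h x)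
    have h2 := (Finset.card_le_card h1).trans (List.toFinset_card_le (chainL G v k))
    rw [Finset.card_univ] at h2
    omega
  have hp : ∃ x, PickP G v (chainL G v k) x :=
    exists_pickP G v hG hH _ (mem_chainL G v k) hex
  refine ⟨hp.choose, hp.choose_spec, ?_⟩
  show extendL G v (chainL G v k) = _
  rw [extendL, dif_pos hp]

end StmtEightAux

private lemma not_cut_of_LLeaf {V : Type*} [Fintype V] (G : SimpleGraph V)
    (hn : 2 ≤ Fintype.card V) (v : V) (σ : Fin (Fintype.card V) ≃ V)
    (hGS : IsGSOrdering G σ) (hL : LLeaf G σ v) : ¬ CutVertex G v := by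
  classical
  intro hcut
  set H := G.induce {w : V | w ≠ v} with hHdef
  have hne : Nonempty {w : V | w ≠ v} := by
    obtain ⟨a, b, hab⟩ := Fintype.exists_pair_of_one_lt_card (α := V) (by omega)
    rcases eq_or_ne a v with rfl | h
    · exact ⟨b, hab.symm⟩
    · exact ⟨a, h⟩
  have hpre : ¬ H.Preconnected := fun h => hcut ⟨h⟩
  unfold SimpleGraph.Preconnected at hpre
  push_neg at hpre
  obtain ⟨a, b, hnab⟩ := hpre
  -- minimal vertex of a reachability class
  have hmin : ∀ x : {w : V | w ≠ v}, ∃ y : {w : V | w ≠ v}, H.Reachable x y ∧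
      ∀ z : {w : V | w ≠ v}, H.Reachable x z → σ.symm y.val ≤ σ.symm z.val := by
    intro x
    obtain ⟨y, hy1, hy2⟩ := Finset.exists_min_image
      (Finset.univ.filter fun z => H.Reachable x z) (fun z => σ.symm z.val)
      ⟨x, Finset.mem_filter.2 ⟨Finset.mem_univ x, SimpleGraph.Reachable.refl x⟩⟩
    rw [Finset.mem_filter] at hy1
    exact ⟨y, hy1.2, fun z hz => hy2 z (by simp [hz])⟩
  -- a minimal class vertex which is not first is an L-child of v
  have hA : ∀ (x y : {w : V | w ≠ v}), H.Reachable x y →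
      (∀ z, H.Reachable x z → σ.symm y.val ≤ σ.symm z.val) →
      (σ.symm y.val).val ≠ 0 → LParent G σ v y.val := by
    intro x y hxy hminy hy0
    have hev : ∀ u : V, G.Adj u y.val → σ.symm u < σ.symm y.val → u = v := by
      intro u hadj hlt
      by_contra huv
      have hadj' : H.Adj ⟨u, huv⟩ y := by
        rw [hHdef]; simpa using hadj
      have : H.Reachable x ⟨u, huv⟩ := hxy.trans hadj'.symm.reachable
      exact absurd (hminy _ this) (not_le.2 hlt)
    obtain ⟨u, hult, huadj⟩ := hGS y.val hy0
    have huv := hev u huadj hult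
    subst huv
    exact ⟨hy0, huadj, hult, fun w hw hwlt => by rw [hev w hw hwlt]⟩
  rcases hL with ⟨h0, w, hwP, huniq⟩ | ⟨h0, hall⟩
  · -- root leaf case
    obtain ⟨ya, hya1, hya2⟩ := hmin a
    obtain ⟨yb, hyb1, hyb2⟩ := hmin b
    have hne0 : ∀ y : {w : V | w ≠ v}, (σ.symm y.val).val ≠ 0 := by
      intro y hy
      have : σ.symm y.val = σ.symm v := Fin.ext (by rw [hy, h0])
      exact y.prop (σ.symm.injective this)
    have h1 := huniq ya.val (hA a ya hya1 hya2 (hne0 ya))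
    have h2 := huniq yb.val (hA b yb hyb1 hyb2 (hne0 yb))
    have : ya = yb := Subtype.ext (h1.trans h2.symm)
    exact hnab (hya1.trans (this ▸ hyb1.symm))
  · -- branch leaf case
    have hrv : σ ⟨0, by omega⟩ ≠ v := by
      intro h
      apply h0
      rw [← h, Equiv.symm_apply_apply]
    set r : {w : V | w ≠ v} := ⟨σ ⟨0, by omega⟩, hrv⟩ with hrdef
    have hx : ∃ x : {w : V | w ≠ v}, ¬ H.Reachable x r := by
      by_contra h
      push_neg at h
      exact hnab ((h a).trans (h b).symm)
    obtain ⟨x, hxr⟩ := hx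
    obtain ⟨y, hy1, hy2⟩ := hmin x
    have hy0 : (σ.symm y.val).val ≠ 0 := by
      intro hy
      have h1 : σ.symm y.val = ⟨0, by omega⟩ := Fin.ext hy
      have h2 : y.val = σ ⟨0, by omega⟩ := by
        rw [← Equiv.apply_symm_apply σ y.val, h1]
      have h3 : y = r := Subtype.ext h2
      exact hxr (h3 ▸ hy1)
    exact hall y.val (hA x y hy1 hy2 hy0)

private lemma exists_mns_lroot {V : Type*} [Fintype V] (G : SimpleGraph V)
    (hG : G.Connected) (hn : 2 ≤ Fintype.card V) (v : V) (hnc : ¬ CutVertex G v) :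
    ∃ σ : Fin (Fintype.card V) ≃ V, IsMNSOrdering G σ ∧ LRootLeaf G σ v := by
  classical
  have hH : (G.induce {w : V | w ≠ v}).Connected := not_not.mp hnc
  set n := Fintype.card V with hn'
  set L := chainL G v (n - 1) with hLdef
  obtain ⟨hnd, hlen0⟩ := chainL_len G v hG hH (n - 1) (by omega)
  rw [← hLdef] at hnd hlen0
  have hlen : L.length = n := by omega
  have hmemL : ∀ x : V, x ∈ L := by
    intro x
    have h1 : L.toFinset = Finset.univ := by
      apply Finset.eq_univ_of_card
      rw [List.toFinset_card_of_nodup hnd, hlen]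
    rw [← List.mem_toFinset, h1]
    exact Finset.mem_univ x
  have hlen' : n = L.length := hlen.symm
  set σ : Fin n ≃ V :=
    (finCongr hlen').trans (List.Nodup.getEquivOfForallMemList L hnd hmemL) with hσdef
  have hσ : ∀ i : Fin n, σ i = L.get (Fin.cast hlen' i) := fun i => rfl
  have hidx : ∀ (i : ℕ) (h : i < n), σ.symm (L.get ⟨i, by omega⟩) = ⟨i, h⟩ := by
    intro i h
    have h2 : σ ⟨i, h⟩ = L.get ⟨i, by omega⟩ := hσ ⟨i, h⟩
    rw [← h2, Equiv.symm_apply_apply]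
  have happly : ∀ w : V, L.get ⟨(σ.symm w).val, by omega⟩ = w := by
    intro w
    have h2 : σ (σ.symm w) = L.get (Fin.cast hlen' (σ.symm w)) := hσ _
    rw [Equiv.apply_symm_apply] at h2
    exact h2.symm
  have hmemtake : ∀ (j : ℕ) (u : V), u ∈ L.take j ↔ (σ.symm u).val < j := by
    intro j u
    constructor
    · intro hu
      obtain ⟨i, hi, hui⟩ := List.getElem_of_mem hu
      have hij : i < j ∧ i < L.length := by
        rw [List.length_take] at hi; omega
      rw [List.getElem_take] at hui
      have h3 : σ.symm u = ⟨i, by omega⟩ := by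
        rw [← hui]
        exact hidx i (by omega)
      rw [h3]
      exact hij.1
    · intro hu
      have h1 : L.get ⟨(σ.symm u).val, by omega⟩ = u := happly u
      have h2 : (L.take j)[(σ.symm u).val]'
          (by rw [List.length_take]; omega) = u := by
        rw [List.getElem_take]; exact h1
      rw [← h2]
      exact List.getElem_mem _
  have hstep : ∀ (j : ℕ), 1 ≤ j → ∀ (h2 : j < n),
      PickP G v (L.take j) (L.get ⟨j, by omega⟩) := by
    intro j h1 h2
    obtain ⟨k, rfl⟩ : ∃ k, j = k + 1 := ⟨j - 1, by omega⟩
    obtain ⟨x, hxP, hchain⟩ := chainL_step G v hG hH k (by omega)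
    obtain ⟨-, hlenk⟩ := chainL_len G v hG hH k (by omega)
    have hpk : chainL G v k <+: L := by
      rw [hLdef]; exact chainL_prefix G v (by omega)
    have htake : chainL G v k = L.take (k + 1) := by
      have h3 := List.prefix_iff_eq_take.1 hpk
      rw [hlenk] at h3
      exact h3
    have hpk1 : chainL G v (k + 1) <+: L := by
      rw [hLdef]; exact chainL_prefix G v (by omega)
    have hget : L.get ⟨k + 1, by omega⟩ = x := by
      have h4 : (chainL G v (k + 1))[k + 1]'
          (by rw [hchain, List.length_append, hlenk]; simp) = x := by
        simp only [hchain]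
        exact List.getElem_concat_length hlenk.symm _
      rw [← h4]
      exact (hpk1.getElem _).symm
    rw [hget, ← htake]
    exact hxP
  have hstep' : ∀ w : V, (σ.symm w).val ≠ 0 →
      PickP G v (L.take (σ.symm w).val) w := by
    intro w hw
    have hj : (σ.symm w).val < n := (σ.symm w).isLt
    have h := hstep (σ.symm w).val (by omega) hj
    rwa [happly w] at h
  have hGS : IsGSOrdering G σ := by
    intro w hw
    obtain ⟨-, ⟨u, hul, hadj⟩, -, -⟩ := hstep' w hw
    exact ⟨u, Fin.lt_def.2 ((hmemtake _ u).1 hul), hadj⟩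
  have hMNS : IsMNSOrdering G σ := by
    refine ⟨hGS, ?_⟩
    intro a b c hab hbc hac hnab
    by_contra hcon
    push_neg at hcon
    have hb0 : (σ.symm b).val ≠ 0 := by
      have := Fin.lt_def.1 hab; omega
    obtain ⟨-, -, hmax, -⟩ := hstep' b hb0
    have hcnl : c ∉ L.take (σ.symm b).val := by
      rw [hmemtake]
      have := Fin.lt_def.1 hbc; omega
    have hsub : ∀ u ∈ L.take (σ.symm b).val, G.Adj u b → G.Adj u c := by
      intro u hu hub
      exact hcon u (Fin.lt_def.2 ((hmemtake _ u).1 hu)) hub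
    exact hnab (hmax c hcnl hsub a ((hmemtake _ a).2 (Fin.lt_def.1 hab)) hac)
  have hv0 : σ.symm v = ⟨0, by omega⟩ := by
    have hpv : chainL G v 0 <+: L := by
      rw [hLdef]; exact chainL_prefix G v (Nat.zero_le _)
    rw [show chainL G v 0 = [v] from rfl] at hpv
    have h1 : L.get ⟨0, by omega⟩ = v := by
      have h2 := hpv.getElem (show 0 < [v].length by simp)
      simpa using h2.symm
    have h3 := hidx 0 (by omega)
    rw [h1] at h3
    exact h3
  have h1n : 1 < n := by omega
  set w1 : V := L.get ⟨1, by omega⟩ with hw1def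
  have hw1idx : σ.symm w1 = ⟨1, h1n⟩ := hidx 1 h1n
  have hw1P := hstep' w1 (by rw [hw1idx]; exact one_ne_zero)
  have hw1v : w1 ≠ v := fun h => by
    have h5 : σ.symm w1 = σ.symm v := congrArg σ.symm h
    rw [hw1idx, hv0] at h5
    exact absurd (Fin.ext_iff.1 h5) (by simp)
  have hadjvw : G.Adj v w1 := by
    obtain ⟨-, ⟨u, hul, hadj⟩, -, -⟩ := hw1P
    have h5 := (hmemtake _ u).1 hul
    rw [hw1idx] at h5
    have huv : u = v := by
      apply σ.symm.injective
      rw [hv0]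
      exact Fin.ext (by simpa using h5)
    rwa [huv] at hadj
  have hLP : LParent G σ v w1 := by
    refine ⟨by rw [hw1idx]; exact one_ne_zero, hadjvw, by rw [hv0, hw1idx]; exact Fin.mk_lt_mk.2 one_pos, ?_⟩
    intro u hadj hlt
    rw [hw1idx] at hlt
    rw [hv0]
    exact Fin.le_def.2 (by have := Fin.lt_def.1 hlt; simp at this ⊢; omega)
  refine ⟨σ, hMNS, by rw [hv0], w1, hLP, ?_⟩
  intro w' hw'
  obtain ⟨hne0, hadj', hlt', hlast'⟩ := hw'
  by_contra hww
  have hj2 : 2 ≤ (σ.symm w').val := by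
    rcases Nat.lt_or_ge (σ.symm w').val 2 with h | h
    · have h6 : (σ.symm w').val = 1 := by omega
      have h7 : σ.symm w' = σ.symm w1 := Fin.ext (by rw [hw1idx]; exact h6)
      exact absurd (σ.symm.injective h7) hww
    · exact h
  obtain ⟨-, -, -, hcond⟩ := hstep' w' hne0
  have hw1mem : w1 ∈ L.take (σ.symm w').val :=
    (hmemtake _ w1).2 (by rw [hw1idx]; exact lt_of_lt_of_le one_lt_two hj2)
  obtain ⟨u, hul, huv, huadj⟩ := hcond ⟨w1, hw1mem, hw1v⟩
  have hult : σ.symm u < σ.symm w' := Fin.lt_def.2 ((hmemtake _ u).1 hul)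
  have h8 := hlast' u huadj hult
  rw [hv0] at h8
  have hu0 : (σ.symm u).val = 0 := by
    have := Fin.le_def.1 h8; simpa using this
  exact huv (σ.symm.injective (by rw [hv0]; exact Fin.ext hu0))

/-- The following are equivalent: (i) `v` is the L-root leaf of some MNS
ordering; (ii) `v` is an L-leaf of some MNS ordering; (iii) `v` is not a cut vertex. -/
theorem stmt8 [Fintype V] (G : SimpleGraph V)
    (hG : G.Connected) (hn : 2 ≤ Fintype.card V) (v : V) :
    List.TFAE [
      (∃ σ : Fin (Fintype.card V) ≃ V, IsMNSOrdering G σ ∧ LRootLeaf G σ v),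
      (∃ σ : Fin (Fintype.card V) ≃ V, IsMNSOrdering G σ ∧ LLeaf G σ v),
      ¬ CutVertex G v] := by
  tfae_have 1 → 2 := by
    rintro ⟨σ, h1, h2⟩
    exact ⟨σ, h1, Or.inl h2⟩
  tfae_have 2 → 3 := by
    rintro ⟨σ, h1, h2⟩
    exact not_cut_of_LLeaf G hn v σ h1.1 h2
  tfae_have 3 → 1 := fun h => exists_mns_lroot G hG hn v h
  tfae_finish
end

section
/- Let G be a connected finite simple graph with at least 2 vertices and let v be a vertex of G. Then v is the L-root leaf of some BFS ordering of G if and only if the subgraph of G induced by the open neighborhood N(v) of v is connected. -/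
open SimpleGraph

variable {V : Type*}

/-! ### Auxiliary machinery for Statement 9 -/

section Stmt9Aux

open Classical

variable [Fintype V]

/-- Priority key: distance to `root` inside the induced neighborhood of `v`. -/
private noncomputable def pKey9 (G : SimpleGraph V) (v root : V) (w : V) : ℕ :=
  if h : G.Adj v root ∧ G.Adj v w then
    (G.induce (G.neighborSet v)).dist ⟨root, (G.mem_neighborSet v root).mpr h.1⟩
      ⟨w, (G.mem_neighborSet v w).mpr h.2⟩
  else 0

/-- Index of the first neighbor of `w` occurring in `L`. -/
private noncomputable def mIdx9 (G : SimpleGraph V) (w : V) (L : List V) : ℕ :=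
  L.findIdx (fun u => decide (G.Adj u w))

private noncomputable def key9 (G : SimpleGraph V) (v root : V) (w : V) (L : List V) : ℕ :=
  mIdx9 G w L * Fintype.card V + pKey9 G v root w

private noncomputable def cand9 (G : SimpleGraph V) (L : List V) : Finset V :=
  Finset.univ.filter (fun w => w ∉ L ∧ ∃ u ∈ L, G.Adj u w)

private lemma mem_cand9 {G : SimpleGraph V} {L : List V} {w : V} :
    w ∈ cand9 G L ↔ w ∉ L ∧ ∃ u ∈ L, G.Adj u w := by
  simp [cand9]

private noncomputable def pick9 (G : SimpleGraph V) (v root : V) (L : List V)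
    (h : (cand9 G L).Nonempty) : V :=
  Classical.choose (Finset.exists_min_image (cand9 G L) (fun w => key9 G v root w L) h)

private lemma pick9_spec (G : SimpleGraph V) (v root : V) (L : List V)
    (h : (cand9 G L).Nonempty) :
    pick9 G v root L h ∈ cand9 G L ∧
      ∀ w ∈ cand9 G L, key9 G v root (pick9 G v root L h) L ≤ key9 G v root w L := by
  have hs := Classical.choose_spec
    (Finset.exists_min_image (cand9 G L) (fun w => key9 G v root w L) h)
  exact ⟨hs.1, hs.2⟩

private noncomputable def step9 (G : SimpleGraph V) (v root : V) (L : List V) : List V :=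
  if h : (cand9 G L).Nonempty then L ++ [pick9 G v root L h] else L

private noncomputable def bl9 (G : SimpleGraph V) (v root : V) : ℕ → List V
  | 0 => [v]
  | n + 1 => step9 G v root (bl9 G v root n)

private lemma nodup_length_le9 {L : List V} (h : L.Nodup) : L.length ≤ Fintype.card V := by
  rw [← List.toFinset_card_of_nodup h, ← Finset.card_univ]
  exact Finset.card_le_univ _

private lemma mem_of_nodup_length9 {L : List V} (h : L.Nodup)
    (hl : Fintype.card V ≤ L.length) (x : V) : x ∈ L := by
  have h1 := List.toFinset_card_of_nodup h
  have h2 : L.toFinset = Finset.univ :=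
    Finset.eq_univ_of_card _ (by rw [h1]; exact le_antisymm (nodup_length_le9 h) hl)
  rw [← List.mem_toFinset, h2]
  exact Finset.mem_univ x

private lemma boundary_aux9 (G : SimpleGraph V) {L : List V} :
    ∀ {a b : V}, G.Walk a b → a ∈ L → b ∉ L → (cand9 G L).Nonempty := by
  intro a b p
  induction p with
  | nil => intro h h'; exact absurd h h'
  | @cons a c b h p ih =>
    intro ha hb
    by_cases hc : c ∈ L
    · exact ih hc hb
    · exact ⟨c, mem_cand9.mpr ⟨hc, a, ha, h⟩⟩

private lemma bl9_inv (G : SimpleGraph V) (hG : G.Connected) (v root : V) (n : ℕ) :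
    (∃ t, bl9 G v root n = v :: t) ∧ (bl9 G v root n).Nodup ∧
      (bl9 G v root n).length = min (n + 1) (Fintype.card V) := by
  induction n with
  | zero =>
    have hc : 1 ≤ Fintype.card V := Fintype.card_pos_iff.mpr hG.nonempty
    exact ⟨⟨[], rfl⟩, by simp [bl9], by simp [bl9]; omega⟩
  | succ n ih =>
    obtain ⟨⟨t, ht⟩, hnd, hlen⟩ := ih
    by_cases hfull : (bl9 G v root n).length = Fintype.card V
    · have hall : ∀ x, x ∈ bl9 G v root n :=
        mem_of_nodup_length9 hnd (le_of_eq hfull.symm)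
      have hcand : ¬ (cand9 G (bl9 G v root n)).Nonempty := by
        rintro ⟨w, hw⟩
        exact (mem_cand9.mp hw).1 (hall w)
      have hstep : bl9 G v root (n + 1) = bl9 G v root n := by
        show step9 G v root _ = _
        rw [step9, dif_neg hcand]
      rw [hstep]
      exact ⟨⟨t, ht⟩, hnd, by omega⟩
    · have hle : (bl9 G v root n).length ≤ Fintype.card V := nodup_length_le9 hnd
      have hlt : (bl9 G v root n).length < Fintype.card V := lt_of_le_of_ne hle hfull
      have hvmem : v ∈ bl9 G v root n := by rw [ht]; exact List.mem_cons_self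
      have hex : ∃ x, x ∉ bl9 G v root n := by
        by_contra hcon
        push_neg at hcon
        have := nodup_length_le9 hnd
        have h2 : Fintype.card V ≤ (bl9 G v root n).length := by
          rw [← List.toFinset_card_of_nodup hnd, ← Finset.card_univ]
          exact Finset.card_le_card (fun x _ => List.mem_toFinset.mpr (hcon x))
        omega
      obtain ⟨x, hx⟩ := hex
      have hcand : (cand9 G (bl9 G v root n)).Nonempty :=
        boundary_aux9 G ((hG.preconnected v x).some) hvmem hx
      obtain ⟨w, hw, hstep⟩ : ∃ w, w ∈ cand9 G (bl9 G v root n) ∧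
          bl9 G v root (n + 1) = bl9 G v root n ++ [w] :=
        ⟨_, (pick9_spec G v root (bl9 G v root n) hcand).1, by
          show step9 G v root _ = _
          rw [step9, dif_pos hcand]⟩
      have hpnm : w ∉ bl9 G v root n := (mem_cand9.mp hw).1
      refine ⟨⟨t ++ [w], by rw [hstep, ht]; rfl⟩, ?_, ?_⟩
      · rw [hstep, List.nodup_append]
        refine ⟨hnd, List.nodup_singleton _, ?_⟩
        intro y hy z hz hyz
        simp only [List.mem_singleton] at hz
        exact hpnm (hz ▸ hyz ▸ hy)
      · rw [hstep]
        simp only [List.length_append, List.length_singleton]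
        omega

private lemma bl9_prefix9 (G : SimpleGraph V) (v root : V) {n m : ℕ} (h : n ≤ m) :
    bl9 G v root n <+: bl9 G v root m := by
  induction m with
  | zero => rw [Nat.le_zero.mp h]
  | succ m ih =>
    rcases Nat.lt_or_ge n (m + 1) with h1 | h1
    · refine (ih (by omega)).trans ?_
      show bl9 G v root m <+: step9 G v root (bl9 G v root m)
      rw [step9]
      split
      · exact List.prefix_append _ _
      · exact List.prefix_rfl
    · have : n = m + 1 := by omega
      rw [this]

end Stmt9Aux

/-- `v` is the L-root leaf of some BFS ordering iff the subgraph induced by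
the open neighborhood of `v` is connected. -/
theorem stmt9 [Fintype V] (G : SimpleGraph V)
    (hG : G.Connected) (hn : 2 ≤ Fintype.card V) (v : V) :
    (∃ σ : Fin (Fintype.card V) ≃ V, IsBFSOrdering G σ ∧ LRootLeaf G σ v) ↔
      (G.induce (G.neighborSet v)).Connected := by
  classical
  constructor
  · rintro ⟨σ, ⟨hgs, h4⟩, hv0, w₁, hw₁, huniq⟩
    -- hv0 : (σ.symm v).val = 0
    have hne0 : ∀ b : V, b ≠ v → (σ.symm b).val ≠ 0 := by
      intro b hb h0
      exact hb (σ.symm.injective (Fin.ext (h0.trans hv0.symm)))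
    have step2 : ∀ b c : V, ¬ G.Adj v b → b ≠ v → G.Adj v c →
        (σ.symm c).val < (σ.symm b).val := by
      intro b c hnb hbv hc
      by_contra hcon
      push_neg at hcon
      have hbc : b ≠ c := fun h => hnb (h ▸ hc)
      have hvne : (σ.symm b).val ≠ (σ.symm c).val := by
        intro h
        exact hbc (σ.symm.injective (Fin.ext h))
      have hlt : σ.symm b < σ.symm c := by
        rw [Fin.lt_def]; omega
      have hvb : σ.symm v < σ.symm b := by
        rw [Fin.lt_def, hv0]
        exact Nat.pos_of_ne_zero (hne0 b hbv)
      obtain ⟨d, hd, _⟩ := h4 v b c hvb hlt hc hnb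
      rw [Fin.lt_def, hv0] at hd
      omega
    have h1lt : 1 < Fintype.card V := hn
    set b₁ := σ ⟨1, h1lt⟩ with hb₁def
    have hsymmb₁ : σ.symm b₁ = ⟨1, h1lt⟩ := by rw [hb₁def, Equiv.symm_apply_apply]
    have hvadj : G.Adj v b₁ := by
      obtain ⟨u, hu, hadj⟩ := hgs b₁ (by rw [hsymmb₁]; exact one_ne_zero)
      have huv : u = v := by
        apply σ.symm.injective
        apply Fin.ext
        rw [hsymmb₁] at hu
        have hu' : (σ.symm u).val < 1 := hu
        rw [hv0]
        omega
      rwa [huv] at hadj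
    have hLP : LParent G σ v b₁ := by
      refine ⟨by rw [hsymmb₁]; exact one_ne_zero, hvadj,
        by rw [Fin.lt_def, hv0, hsymmb₁]; exact Nat.zero_lt_one, ?_⟩
      intro w' hadj' hlt'
      rw [Fin.le_def, hv0]
      rw [hsymmb₁] at hlt'
      have hlt'' : (σ.symm w').val < 1 := hlt'
      omega
    have hb₁w₁ : b₁ = w₁ := huniq b₁ hLP
    have step4 : ∀ u : V, G.Adj v u → 2 ≤ (σ.symm u).val →
        ∃ u', G.Adj u' u ∧ G.Adj v u' ∧ 1 ≤ (σ.symm u').val ∧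
          (σ.symm u').val < (σ.symm u).val := by
      intro u hadj h2
      have hnLP : ¬ LParent G σ v u := by
        intro h
        have hub : u = w₁ := huniq u h
        rw [← hb₁w₁] at hub
        rw [hub, hsymmb₁] at h2
        have h2' : (2 : ℕ) ≤ 1 := h2
        omega
      rw [LParent] at hnLP
      push_neg at hnLP
      obtain ⟨w', hadj', hlt', hgt'⟩ :=
        hnLP (by omega) hadj (by rw [Fin.lt_def, hv0]; omega)
      rw [Fin.lt_def] at hlt' hgt'
      rw [hv0] at hgt'
      refine ⟨w', hadj', ?_, by omega, by omega⟩
      by_contra hnq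
      have hw'v : w' ≠ v := by
        intro h
        rw [h, hv0] at hgt'
        omega
      have := step2 w' u hnq hw'v hadj
      omega
    have hmem₁ : b₁ ∈ G.neighborSet v := (G.mem_neighborSet v b₁).mpr hvadj
    have hreach : ∀ (k : ℕ) (x : ↥(G.neighborSet v)), (σ.symm x.val).val ≤ k + 1 →
        (G.induce (G.neighborSet v)).Reachable x ⟨b₁, hmem₁⟩ := by
      intro k
      induction k with
      | zero =>
        intro x hx
        have hxv : x.val ≠ v := by
          intro h
          have hxp := x.prop
          rw [h] at hxp
          exact G.irrefl ((G.mem_neighborSet v v).mp hxp)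
        have hx1 : (σ.symm x.val).val = 1 := by
          have := hne0 x.val hxv
          omega
        have hxe : x.val = b₁ := by
          apply σ.symm.injective
          rw [hsymmb₁]
          exact Fin.ext hx1
        rw [show x = (⟨b₁, hmem₁⟩ : ↥(G.neighborSet v)) from Subtype.ext hxe]
      | succ k ih =>
        intro x hx
        by_cases hk : (σ.symm x.val).val ≤ k + 1
        · exact ih x hk
        · have hadjx : G.Adj v x.val := (G.mem_neighborSet v x.val).mp x.prop
          obtain ⟨u', hadj', hvu', h1u', hltu'⟩ := step4 x.val hadjx (by omega)
          have hmu' : u' ∈ G.neighborSet v := (G.mem_neighborSet v u').mpr hvu'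
          have hadjH : (G.induce (G.neighborSet v)).Adj x ⟨u', hmu'⟩ := by
            simp only [SimpleGraph.comap_adj, Function.Embedding.coe_subtype]
            exact hadj'.symm
          exact (hadjH.reachable).trans
            (ih ⟨u', hmu'⟩ (by show (σ.symm u').val ≤ k + 1; omega))
    haveI : Nonempty ↥(G.neighborSet v) := ⟨⟨b₁, hmem₁⟩⟩
    refine ⟨fun x y => ?_⟩
    exact (hreach (σ.symm x.val).val x (by omega)).trans
      (hreach (σ.symm y.val).val y (by omega)).symm
  · intro hNc
    have hNne : (G.neighborSet v).Nonempty := by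
      obtain ⟨x⟩ := hNc.nonempty
      exact ⟨x.val, x.prop⟩
    obtain ⟨root, hrootmem⟩ := hNne
    have hroot : G.Adj v root := (G.mem_neighborSet v root).mp hrootmem
    set L := bl9 G v root (Fintype.card V - 1) with hLdef
    obtain ⟨⟨t, ht⟩, hnd, hlen0⟩ := bl9_inv G hG v root (Fintype.card V - 1)
    rw [← hLdef] at ht hnd hlen0
    have hLlen : L.length = Fintype.card V := by omega
    have hmem : ∀ x, x ∈ L := mem_of_nodup_length9 hnd (le_of_eq hLlen.symm)
    have hposlen : ∀ w, L.idxOf w < L.length := fun w => List.idxOf_lt_length_iff.mpr (hmem w)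
    have hposlt : ∀ w, L.idxOf w < Fintype.card V := fun w => hLlen ▸ hposlen w
    have hgetidx : ∀ w, L[L.idxOf w]'(hposlen w) = w := by
      intro w
      simpa using List.idxOf_get (hposlen w)
    have hidx : ∀ (i : ℕ) (h : i < L.length), L.idxOf (L[i]'h) = i :=
      fun i h => hnd.idxOf_getElem i h
    have hv0 : L.idxOf v = 0 := by rw [ht]; exact List.idxOf_cons_self
    have hidxinj : ∀ x y : V, L.idxOf x = L.idxOf y → x = y := by
      intro x y h
      exact (List.idxOf_inj (hmem x)).mp h
    have hmtake : ∀ (w : V) (j : ℕ), j ≤ L.length → (w ∈ L.take j ↔ L.idxOf w < j) := by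
      intro w j hj
      constructor
      · intro hmemt
        have heq : L.idxOf w = (L.take j).idxOf w := by
          conv_lhs => rw [← List.take_append_drop j L]
          rw [List.idxOf_append_of_mem hmemt]
        have hlt := List.idxOf_lt_length_iff.mpr hmemt
        rw [List.length_take] at hlt
        omega
      · intro hlt
        have hb : L.idxOf w < (L.take j).length := by rw [List.length_take]; omega
        have heq : (L.take j)[L.idxOf w]'hb = w := by
          rw [List.getElem_take]
          exact hgetidx w
        exact heq ▸ List.getElem_mem hb
    have htake : ∀ j : ℕ, 1 ≤ j → j ≤ Fintype.card V →
        bl9 G v root (j - 1) = L.take j := by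
      intro j h1 h2
      have hpre : bl9 G v root (j - 1) <+: L := hLdef ▸ bl9_prefix9 G v root (by omega)
      have hl : (bl9 G v root (j - 1)).length = j := by
        have := (bl9_inv G hG v root (j - 1)).2.2
        omega
      rw [List.prefix_iff_eq_take.mp hpre, hl]
    have hW : ∀ j : ℕ, 1 ≤ j → j < Fintype.card V →
        ∃ (h : (cand9 G (L.take j)).Nonempty) (hj : j < L.length),
          L[j]'hj = pick9 G v root (L.take j) h := by
      intro j h1 h2
      have hPe : bl9 G v root (j - 1) = L.take j := htake j h1 (le_of_lt h2)
      have hstep : bl9 G v root j = step9 G v root (L.take j) := by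
        rw [← hPe]
        conv_lhs => rw [show j = (j - 1) + 1 by omega]
        rfl
      have hlenj : (bl9 G v root j).length = j + 1 := by
        have := (bl9_inv G hG v root j).2.2
        omega
      have htl : (L.take j).length = j := by rw [List.length_take]; omega
      have hne : (cand9 G (L.take j)).Nonempty := by
        by_contra hcon
        rw [hstep, step9, dif_neg hcon, htl] at hlenj
        omega
      have hblj : bl9 G v root j = L.take j ++ [pick9 G v root (L.take j) hne] := by
        rw [hstep, step9, dif_pos hne]
      have hblj2 : bl9 G v root j = L.take (j + 1) := by
        have h3 := htake (j + 1) (by omega) (by omega)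
        simpa using h3
      have heq : L.take (j + 1) = L.take j ++ [pick9 G v root (L.take j) hne] := by
        rw [← hblj2]
        exact hblj
      have hjlen : j < L.length := by omega
      refine ⟨hne, hjlen, ?_⟩
      have h1' : (L.take (j + 1))[j]'(by rw [List.length_take]; omega) = L[j]'hjlen :=
        List.getElem_take
      rw [← h1', List.getElem_of_eq heq]
      exact List.getElem_concat_length htl.symm _
    have hspec : ∀ j : ℕ, 1 ≤ j → j < Fintype.card V → ∀ hj : j < L.length,
        (L[j]'hj ∉ L.take j) ∧ (∃ u ∈ L.take j, G.Adj u (L[j]'hj)) ∧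
          ∀ w ∈ cand9 G (L.take j),
            key9 G v root (L[j]'hj) (L.take j) ≤ key9 G v root w (L.take j) := by
      intro j h1 h2 hj
      obtain ⟨h, hj', hpe⟩ := hW j h1 h2
      have hpe' : L[j]'hj = pick9 G v root (L.take j) h := hpe
      obtain ⟨hm, hmin⟩ := pick9_spec G v root (L.take j) h
      rw [← hpe'] at hm hmin
      exact ⟨(mem_cand9.mp hm).1, (mem_cand9.mp hm).2, hmin⟩
    have hm1 : ∀ (w : V) (j : ℕ), j ≤ L.length → (∃ u ∈ L.take j, G.Adj u w) →
        mIdx9 G w (L.take j) < j ∧ mIdx9 G w L = mIdx9 G w (L.take j) := by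
      intro w j hj hex
      have hex' : ∃ u ∈ L.take j, (fun u => decide (G.Adj u w)) u = true := by
        obtain ⟨u, hu, ha⟩ := hex
        exact ⟨u, hu, by simpa using ha⟩
      have h1 : List.findIdx (fun u => decide (G.Adj u w)) (L.take j) < (L.take j).length :=
        List.findIdx_lt_length_of_exists hex'
      have h1' : mIdx9 G w (L.take j) < j := by
        have h2 := h1
        rw [List.length_take] at h2
        exact lt_of_lt_of_le h2 (min_le_left _ _)
      refine ⟨h1', ?_⟩
      show List.findIdx (fun u => decide (G.Adj u w)) L
        = List.findIdx (fun u => decide (G.Adj u w)) (L.take j)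
      conv_lhs => rw [← List.take_append_drop j L]
      rw [List.findIdx_append, if_pos h1]
    have hm2 : ∀ (w : V) (j : ℕ), j ≤ L.length → (¬ ∃ u ∈ L.take j, G.Adj u w) →
        j ≤ mIdx9 G w L := by
      intro w j hj hnex
      have hall : ∀ x ∈ L.take j, (fun u => decide (G.Adj u w)) x = false := by
        intro x hx
        simp only [decide_eq_false_iff_not]
        exact fun ha => hnex ⟨x, hx, ha⟩
      have heq : List.findIdx (fun u => decide (G.Adj u w)) (L.take j) = (L.take j).length :=
        List.findIdx_eq_length.mpr hall
      show j ≤ List.findIdx (fun u => decide (G.Adj u w)) L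
      conv_rhs => rw [← List.take_append_drop j L]
      rw [List.findIdx_append, if_neg (by rw [heq]; exact lt_irrefl _)]
      rw [List.length_take]
      omega
    have hpKeylt : ∀ w, pKey9 G v root w < Fintype.card V := by
      intro w
      unfold pKey9
      split
      · next h =>
        obtain ⟨p, hp, hplen⟩ := hNc.exists_path_of_dist
          ⟨root, (G.mem_neighborSet v root).mpr h.1⟩ ⟨w, (G.mem_neighborSet v w).mpr h.2⟩
        have hlt := hp.length_lt
        have hle : Fintype.card ↥(G.neighborSet v) ≤ Fintype.card V :=
          Fintype.card_subtype_le _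
        omega
      · omega
    have hkeyle : ∀ a a' p p' : ℕ, p' < Fintype.card V →
        a * Fintype.card V + p ≤ a' * Fintype.card V + p' → a ≤ a' := by
      intro a a' p p' hp' hle
      by_contra hcon
      push_neg at hcon
      have h1 : a' + 1 ≤ a := hcon
      nlinarith
    have hmadj : ∀ (b : V) (h : mIdx9 G b L < L.length), G.Adj (L[mIdx9 G b L]'h) b := by
      intro b h
      unfold mIdx9 at h ⊢
      have := List.findIdx_getElem (w := h)
      exact of_decide_eq_true this
    have hmle : ∀ b u : V, G.Adj u b → mIdx9 G b L ≤ L.idxOf u := by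
      intro b u hadj
      by_contra hcon
      push_neg at hcon
      have hfalse := List.not_of_lt_findIdx hcon
      have hgu := hgetidx u
      simp only [hgu] at hfalse
      simp at hfalse
      exact hfalse hadj
    have hA : ∀ b c : V, 1 ≤ L.idxOf b → L.idxOf b < L.idxOf c →
        mIdx9 G b L ≤ mIdx9 G c L := by
      intro b c h1 h2
      have hib : L.idxOf b < L.length := hposlen b
      have hbeq : L[L.idxOf b]'hib = b := hgetidx b
      obtain ⟨hnm, hex, hmin⟩ := hspec (L.idxOf b) h1 (hposlt b) hib
      rw [hbeq] at hex hmin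
      have hcni : c ∉ L.take (L.idxOf b) := by
        rw [hmtake c _ (le_of_lt hib)]
        omega
      by_cases hec : ∃ u ∈ L.take (L.idxOf b), G.Adj u c
      · have hk := hmin c (mem_cand9.mpr ⟨hcni, hec⟩)
        unfold key9 at hk
        have hq := hkeyle _ _ _ _ (hpKeylt c) hk
        rw [(hm1 b _ (le_of_lt hib) hex).2, (hm1 c _ (le_of_lt hib) hec).2]
        exact hq
      · have hq1 := hm2 c _ (le_of_lt hib) hec
        have hq2 := hm1 b _ (le_of_lt hib) hex
        omega
    -- build the equiv
    have hflt : ∀ i : Fin (Fintype.card V), (i : ℕ) < L.length := by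
      intro i
      rw [hLlen]
      exact i.isLt
    let f : Fin (Fintype.card V) → V := fun i => L[(i : ℕ)]'(hflt i)
    have hfinj : Function.Injective f := by
      intro i j hij
      apply Fin.ext
      have h1 : L.idxOf (f i) = (i : ℕ) := hidx _ _
      have h2 : L.idxOf (f j) = (j : ℕ) := hidx _ _
      rw [← h1, ← h2, hij]
    let σ : Fin (Fintype.card V) ≃ V :=
      Equiv.ofBijective f ((Fintype.bijective_iff_injective_and_card f).mpr ⟨hfinj, by simp⟩)
    have hsymm : ∀ w : V, (σ.symm w).val = L.idxOf w := by
      intro w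
      have h1 : σ ⟨L.idxOf w, hposlt w⟩ = w := hgetidx w
      have h2 : σ.symm w = ⟨L.idxOf w, hposlt w⟩ := by
        rw [Equiv.symm_apply_eq]
        exact h1.symm
      rw [h2]
    -- facts about position 1
    have h1len : 1 < L.length := by omega
    have htake1 : L.take 1 = [v] := by rw [ht]; rfl
    obtain ⟨hnm1, hex1, hmin1⟩ := hspec 1 le_rfl hn h1len
    have hadj1 : G.Adj v (L[1]'h1len) := by
      obtain ⟨u, hu, hadj⟩ := hex1
      rw [htake1] at hu
      simp only [List.mem_singleton] at hu
      rwa [hu] at hadj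
    have hrne : root ∉ L.take 1 := by
      rw [htake1]
      simp only [List.mem_singleton]
      exact hroot.ne'
    have hrcand : root ∈ cand9 G (L.take 1) :=
      mem_cand9.mpr ⟨hrne, v, by rw [htake1]; exact List.mem_singleton_self v, hroot⟩
    have hkey1 := hmin1 root hrcand
    have hm0root : mIdx9 G root (L.take 1) = 0 := by
      rw [htake1]
      show List.findIdx (fun u => decide (G.Adj u root)) [v] = 0
      rw [List.findIdx_cons]
      simp [hroot]
    have hp0root : pKey9 G v root root = 0 := by
      unfold pKey9
      rw [dif_pos ⟨hroot, hroot⟩]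
      exact SimpleGraph.dist_self
    have hkeyroot : key9 G v root root (L.take 1) = 0 := by
      unfold key9
      rw [hm0root, hp0root]
      simp
    have hL1root : L[1]'h1len = root := by
      rw [hkeyroot] at hkey1
      have hple : pKey9 G v root (L[1]'h1len) = 0 := by
        unfold key9 at hkey1
        omega
      unfold pKey9 at hple
      rw [dif_pos ⟨hroot, hadj1⟩] at hple
      have heq := (hNc.dist_eq_zero_iff).mp hple
      exact (congrArg Subtype.val heq).symm
    have hdec : ∀ w : V, G.Adj v w → w ≠ root →
        ∃ u, G.Adj v u ∧ G.Adj u w ∧ pKey9 G v root u < pKey9 G v root w := by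
      intro w hw hwr
      have hab : (⟨w, (G.mem_neighborSet v w).mpr hw⟩ : ↥(G.neighborSet v))
          ≠ ⟨root, (G.mem_neighborSet v root).mpr hroot⟩ := by
        intro h
        exact hwr (congrArg Subtype.val h)
      obtain ⟨p, hp, hplen⟩ := hNc.exists_path_of_dist
        (⟨w, (G.mem_neighborSet v w).mpr hw⟩ : ↥(G.neighborSet v))
        ⟨root, (G.mem_neighborSet v root).mpr hroot⟩
      obtain ⟨x, hadjbx, q, rfl⟩ := SimpleGraph.Walk.exists_eq_cons_of_ne hab p
      have hlq : (G.induce (G.neighborSet v)).dist x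
          ⟨root, (G.mem_neighborSet v root).mpr hroot⟩ ≤ q.length :=
        SimpleGraph.dist_le q
      have hlen' : q.length + 1 = (G.induce (G.neighborSet v)).dist
          ⟨w, (G.mem_neighborSet v w).mpr hw⟩ ⟨root, (G.mem_neighborSet v root).mpr hroot⟩ := by
        simpa using hplen
      have hxadj : G.Adj v x.val := (G.mem_neighborSet v x.val).mp x.prop
      refine ⟨x.val, hxadj, ?_, ?_⟩
      · have hGadj : G.Adj w x.val := by
          have := hadjbx
          simp only [SimpleGraph.comap_adj, Function.Embedding.coe_subtype] at this
          exact this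
        exact hGadj.symm
      · unfold pKey9
        rw [dif_pos ⟨hroot, hxadj⟩, dif_pos ⟨hroot, hw⟩]
        have e1 : (⟨x.val, (G.mem_neighborSet v x.val).mpr hxadj⟩
            : ↥(G.neighborSet v)) = x := Subtype.coe_eta _ _
        rw [e1]
        have hlq' : (G.induce (G.neighborSet v)).dist
            ⟨root, (G.mem_neighborSet v root).mpr hroot⟩ x ≤ q.length := by
          rw [SimpleGraph.dist_comm]
          exact hlq
        have hlen'' : q.length + 1 = (G.induce (G.neighborSet v)).dist
            ⟨root, (G.mem_neighborSet v root).mpr hroot⟩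
            ⟨w, (G.mem_neighborSet v w).mpr hw⟩ := by
          rw [SimpleGraph.dist_comm]
          exact hlen'
        omega
    have hL2 : ∀ w : V, G.Adj v w → 2 ≤ L.idxOf w →
        ∃ u, G.Adj u w ∧ 1 ≤ L.idxOf u ∧ L.idxOf u < L.idxOf w := by
      intro w hadj hj2
      set j := L.idxOf w with hjdef
      have hjlen : j < L.length := hposlen w
      have hwj : L[j]'hjlen = w := hgetidx w
      have hwroot : w ≠ root := by
        intro h
        have hj1 : L.idxOf w = 1 := by
          rw [h, ← hL1root]
          exact hidx 1 h1len
        omega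
      obtain ⟨u, huv, huw, hup⟩ := hdec w hadj hwroot
      by_cases hu : u ∈ L.take j
      · refine ⟨u, huw, ?_, (hmtake u _ (le_of_lt hjlen)).mp hu⟩
        have huvne : u ≠ v := fun h => G.irrefl (h ▸ huv)
        have hne0 : L.idxOf u ≠ 0 := by
          intro h0
          exact huvne (hidxinj u v (by rw [h0, hv0]))
        omega
      · exfalso
        have hvtake : v ∈ L.take j := by
          rw [hmtake v _ (le_of_lt hjlen), hv0]
          omega
        have hucand : u ∈ cand9 G (L.take j) := mem_cand9.mpr ⟨hu, v, hvtake, huv⟩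
        obtain ⟨_, _, hmin⟩ := hspec j (by omega) (hposlt w) hjlen
        have hk := hmin u hucand
        rw [hwj] at hk
        have htj : L.take j = v :: t.take (j - 1) := by
          conv_lhs => rw [ht, show j = (j - 1) + 1 by omega]
          rw [List.take_succ_cons]
        have hm0w : mIdx9 G w (L.take j) = 0 := by
          rw [htj]
          show List.findIdx (fun u => decide (G.Adj u w)) (v :: t.take (j - 1)) = 0
          rw [List.findIdx_cons]
          simp [hadj]
        have hm0u : mIdx9 G u (L.take j) = 0 := by
          rw [htj]
          show List.findIdx (fun x => decide (G.Adj x u)) (v :: t.take (j - 1)) = 0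
          rw [List.findIdx_cons]
          simp [huv]
        unfold key9 at hk
        rw [hm0w, hm0u] at hk
        simp only [Nat.zero_mul, Nat.zero_add] at hk
        omega
    refine ⟨σ, ⟨?_, ?_⟩, ?_, ?_⟩
    · -- GS ordering
      intro w hw
      rw [hsymm] at hw
      have h1 : 1 ≤ L.idxOf w := Nat.one_le_iff_ne_zero.mpr hw
      obtain ⟨hnm, hex, _⟩ := hspec (L.idxOf w) h1 (hposlt w) (hposlen w)
      rw [hgetidx w] at hex
      obtain ⟨u, hu, hadjuw⟩ := hex
      refine ⟨u, ?_, hadjuw⟩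
      rw [Fin.lt_def, hsymm, hsymm]
      exact (hmtake u _ (le_of_lt (hposlen w))).mp hu
    · -- BFS 4-point
      intro a b c hab hbc hac hnadj
      rw [Fin.lt_def, hsymm, hsymm] at hab hbc
      have h1b : 1 ≤ L.idxOf b := by omega
      have hmb : mIdx9 G b L ≤ mIdx9 G c L := hA b c h1b (by omega)
      have hmc : mIdx9 G c L ≤ L.idxOf a := hmle c a hac
      have hmlt : mIdx9 G b L < L.length := by
        have := hposlen a
        omega
      have hadjd : G.Adj (L[mIdx9 G b L]'hmlt) b := hmadj b hmlt
      have hdidx : L.idxOf (L[mIdx9 G b L]'hmlt) = mIdx9 G b L := hidx _ _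
      have hdna : L[mIdx9 G b L]'hmlt ≠ a := fun h => hnadj (h ▸ hadjd)
      have hdne : L.idxOf (L[mIdx9 G b L]'hmlt) ≠ L.idxOf a :=
        fun h => hdna (hidxinj _ _ h)
      refine ⟨L[mIdx9 G b L]'hmlt, ?_, hadjd⟩
      rw [Fin.lt_def, hsymm, hsymm]
      omega
    · -- first vertex is v
      rw [hsymm, hv0]
    · -- unique child
      refine ⟨L[1]'h1len, ⟨?_, hadj1, ?_, ?_⟩, ?_⟩
      · rw [hsymm, hidx 1 h1len]
        exact one_ne_zero
      · rw [Fin.lt_def, hsymm, hsymm, hv0, hidx 1 h1len]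
        exact Nat.zero_lt_one
      · intro w' hadj' hlt'
        rw [Fin.le_def, hsymm, hsymm, hv0]
        rw [Fin.lt_def, hsymm, hsymm, hidx 1 h1len] at hlt'
        omega
      · intro y hy
        obtain ⟨hy0, hyadj, _, hylast⟩ := hy
        rw [hsymm] at hy0
        by_contra hne
        have hyi : 2 ≤ L.idxOf y := by
          rcases Nat.lt_or_ge (L.idxOf y) 2 with h | h
          · have h1 : L.idxOf y = 1 := by omega
            exact absurd (hidxinj y _ (by rw [h1, hidx 1 h1len])) hne
          · exact h
        obtain ⟨u, huw, hu1, hu2⟩ := hL2 y hyadj hyi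
        have hle := hylast u huw (by rw [Fin.lt_def, hsymm, hsymm]; exact hu2)
        rw [Fin.le_def, hsymm, hsymm, hv0] at hle
        omega
end

section
/- Let G be a finite simple graph with vertex set {v_1,…,v_n}, n ≥ 2. Let G' be the graph whose vertex set is V(G) together with n new vertices v'_1,…,v'_n and one further new vertex y, and whose edges are: all edges of G; the edge v_i v'_i for each i ∈ {1,…,n}; and an edge from y to every other vertex of G'. Then there exists a DFS ordering of G' in which y is an F-branch leaf if and only if G has a Hamiltonian path (a path visiting every vertex of G exactly once). -/
open SimpleGraph

variable {V : Type*}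

/-- The graph `G'` of STATEMENT 11: the vertices of `G` (as `Sum.inl v`), a pendant
vertex `v'` attached to each vertex `v` of `G` (as `Sum.inr (Sum.inl v)`), and a
universal vertex `y` (as `Sum.inr (Sum.inr ())`). -/
def splitLeafGraph (G : SimpleGraph V) : SimpleGraph (V ⊕ V ⊕ Unit) :=
  SimpleGraph.fromRel (fun a b =>
    match a, b with
    | Sum.inl a, Sum.inl b => G.Adj a b
    | Sum.inl a, Sum.inr (Sum.inl b) => a = b
    | _, Sum.inr (Sum.inr _) => True
    | _, _ => False)

section Stmt11Aux

private lemma slg_adj_inl_inl (G : SimpleGraph V) {a b : V} :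
    (splitLeafGraph G).Adj (Sum.inl a) (Sum.inl b) ↔ G.Adj a b := by
  rw [splitLeafGraph, SimpleGraph.fromRel_adj]
  constructor
  · rintro ⟨h, h2 | h2⟩
    · exact h2
    · exact h2.symm
  · intro h
    exact ⟨by simpa using h.ne, Or.inl h⟩

lemma slg_adj_y (G : SimpleGraph V) {x : V ⊕ V ⊕ Unit} (h : x ≠ Sum.inr (Sum.inr ())) :
    (splitLeafGraph G).Adj x (Sum.inr (Sum.inr ())) := by
  rw [splitLeafGraph, SimpleGraph.fromRel_adj]
  refine ⟨h, Or.inl ?_⟩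
  rcases x with a | b | u <;> trivial

lemma slg_adj_pendant (G : SimpleGraph V) {x : V ⊕ V ⊕ Unit} {v : V} :
    (splitLeafGraph G).Adj x (Sum.inr (Sum.inl v)) ↔
      x = Sum.inl v ∨ x = Sum.inr (Sum.inr ()) := by
  rcases x with a | b | u <;> rw [splitLeafGraph, SimpleGraph.fromRel_adj]
  · constructor
    · rintro ⟨h, h2 | h2⟩
      · exact Or.inl (by simpa using h2)
      · exact h2.elim
    · rintro (h | h)
      · exact ⟨by simp, Or.inl (by simpa using h)⟩
      · simp at h
  · constructor
    · rintro ⟨h, h2 | h2⟩ <;> exact h2.elim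
    · rintro (h | h) <;> simp at h
  · constructor
    · rintro ⟨h, h2 | h2⟩
      · exact h2.elim
      · exact Or.inr rfl
    · rintro (h | h)
      · simp at h
      · exact ⟨by simp, Or.inr trivial⟩

private lemma walk_of_chain {W : Type*} (G : SimpleGraph W) (g : ℕ → W) (s : ℕ) :
    ∀ m : ℕ, (∀ i, s ≤ i → i < s + m → G.Adj (g i) (g (i + 1))) →
      ∃ q : G.Walk (g s) (g (s + m)),
        q.support = (List.range (m + 1)).map (fun j => g (s + j)) := by
  intro m
  induction m with
  | zero => intro _; exact ⟨SimpleGraph.Walk.nil, by simp [List.range_succ]⟩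
  | succ m ih =>
    intro h
    obtain ⟨q, hq⟩ := ih (fun i h1 h2 => h i h1 (by omega))
    refine ⟨q.concat (h (s + m) (by omega) (by omega)), ?_⟩
    rw [SimpleGraph.Walk.support_concat, hq]
    simp [List.range_succ]

private def hamFwd (v0 : V) (L : List V) (n : ℕ) : Fin (n + (n + 1)) → V ⊕ V ⊕ Unit :=
  fun i => if i.val < n then Sum.inl (L.getD i.val v0)
    else if i.val = n then Sum.inr (Sum.inr ())
    else Sum.inr (Sum.inl (L.getD (i.val - (n + 1)) v0))

private def hamInv [DecidableEq V] (L : List V) (n : ℕ) (hidx : ∀ v : V, L.idxOf v < n) :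
    V ⊕ V ⊕ Unit → Fin (n + (n + 1))
  | Sum.inl v => ⟨L.idxOf v, by have := hidx v; omega⟩
  | Sum.inr (Sum.inl v) => ⟨n + 1 + L.idxOf v, by have := hidx v; omega⟩
  | Sum.inr (Sum.inr _) => ⟨n, by omega⟩

private def hamEquiv [DecidableEq V] (v0 : V) (L : List V) (n : ℕ) (hlen : L.length = n)
    (hnd : L.Nodup) (hmem : ∀ v : V, v ∈ L) : Fin (n + (n + 1)) ≃ (V ⊕ V ⊕ Unit) where
  toFun := hamFwd v0 L n
  invFun := hamInv L n (fun v => hlen ▸ List.idxOf_lt_length_iff.2 (hmem v))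
  left_inv := by
    have hidx : ∀ v : V, L.idxOf v < n := fun v => hlen ▸ List.idxOf_lt_length_iff.2 (hmem v)
    intro i
    apply Fin.ext
    by_cases h1 : i.val < n
    · have hget : i.val < L.length := by omega
      simp only [hamFwd, if_pos h1, List.getD_eq_get L v0 ⟨_, hget⟩, hamInv]
      exact List.get_idxOf hnd _
    · by_cases h2 : i.val = n
      · simp only [hamFwd, if_neg h1, if_pos h2, hamInv]
        omega
      · have hget : i.val - (n + 1) < L.length := by rw [hlen]; have := i.isLt; omega
        simp only [hamFwd, if_neg h1, if_neg h2, List.getD_eq_get L v0 ⟨_, hget⟩, hamInv]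
        rw [List.get_idxOf hnd]
        have := i.isLt
        simp only []
        omega
  right_inv := by
    have hidx : ∀ v : V, L.idxOf v < n := fun v => hlen ▸ List.idxOf_lt_length_iff.2 (hmem v)
    rintro (v | v | ⟨⟩)
    · have h1 : L.idxOf v < n := hidx v
      have hget : L.idxOf v < L.length := List.idxOf_lt_length_iff.2 (hmem v)
      simp only [hamInv, hamFwd, if_pos h1, List.getD_eq_get L v0 ⟨_, hget⟩, List.idxOf_get]
    · have h1 : L.idxOf v < n := hidx v
      have hget : L.idxOf v < L.length := List.idxOf_lt_length_iff.2 (hmem v)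
      have e1 : ¬ (n + 1 + L.idxOf v < n) := by omega
      have e2 : ¬ (n + 1 + L.idxOf v = n) := by omega
      have e3 : n + 1 + L.idxOf v - (n + 1) = L.idxOf v := by omega
      simp only [hamInv, hamFwd, if_neg e1, if_neg e2, e3, List.getD_eq_get L v0 ⟨_, hget⟩,
        List.idxOf_get]
    · simp [hamInv, hamFwd]

private lemma hamEquiv_symm_inl [DecidableEq V] (v0 : V) (L : List V) (n : ℕ) (hlen : L.length = n)
    (hnd : L.Nodup) (hmem : ∀ v : V, v ∈ L) (v : V) :
    ((hamEquiv v0 L n hlen hnd hmem).symm (Sum.inl v)).val = L.idxOf v := rfl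

private lemma hamEquiv_symm_pendant [DecidableEq V] (v0 : V) (L : List V) (n : ℕ) (hlen : L.length = n)
    (hnd : L.Nodup) (hmem : ∀ v : V, v ∈ L) (v : V) :
    ((hamEquiv v0 L n hlen hnd hmem).symm (Sum.inr (Sum.inl v))).val = n + 1 + L.idxOf v := rfl

private lemma hamEquiv_symm_y [DecidableEq V] (v0 : V) (L : List V) (n : ℕ) (hlen : L.length = n)
    (hnd : L.Nodup) (hmem : ∀ v : V, v ∈ L) :
    ((hamEquiv v0 L n hlen hnd hmem).symm (Sum.inr (Sum.inr ()))).val = n := rfl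

end Stmt11Aux

/-- `y` is an F-branch leaf of some DFS ordering of `G'` iff `G` has a
Hamiltonian path. -/
theorem stmt11 [Fintype V] [DecidableEq V] (G : SimpleGraph V)
    (hn : 2 ≤ Fintype.card V) :
    (∃ σ : Fin (Fintype.card (V ⊕ V ⊕ Unit)) ≃ (V ⊕ V ⊕ Unit),
        IsDFSOrdering (splitLeafGraph G) σ ∧
        FBranchLeaf (splitLeafGraph G) σ (Sum.inr (Sum.inr ()))) ↔
      ∃ (u w : V) (p : G.Walk u w), p.IsHamiltonian := by
  constructor
  · rintro ⟨σ, ⟨hGS, hDFS⟩, hy0, hyleaf⟩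
    haveI : Nonempty V := Fintype.card_pos_iff.mp (by omega)
    have hcard : Fintype.card (V ⊕ V ⊕ Unit) = Fintype.card V + (Fintype.card V + 1) := by
      simp [Fintype.card_sum]
    set n := Fintype.card V with hn_def
    set P := (σ.symm (Sum.inr (Sum.inr ()))).val with hP_def
    have hPN : P < (Fintype.card (V ⊕ V ⊕ Unit)) := (σ.symm _).isLt
    have hP0 : P ≠ 0 := hy0
    have hN0 : 0 < (Fintype.card (V ⊕ V ⊕ Unit)) := by omega
    -- every non-first vertex other than y has a neighbor before y
    have hnpar : ∀ x : V ⊕ V ⊕ Unit, x ≠ Sum.inr (Sum.inr ()) → (σ.symm x).val ≠ 0 →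
        ∃ z, (splitLeafGraph G).Adj z x ∧ (σ.symm z).val < P := by
      intro x hx h0
      have h1 := hyleaf x
      rw [FParent] at h1
      push_neg at h1
      obtain ⟨z, hz1, hz2⟩ := h1 h0 ((slg_adj_y G hx).symm)
      exact ⟨z, hz1, by rw [Fin.lt_def] at hz2; exact hz2⟩
    -- consecutive vertices before y are adjacent
    have hF1 : ∀ i j : Fin (Fintype.card (V ⊕ V ⊕ Unit)), (i : ℕ) + 1 = (j : ℕ) → (j : ℕ) < P →
        (splitLeafGraph G).Adj (σ i) (σ j) := by
      intro i j hij hjP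
      by_contra hne
      have hiy : σ i ≠ Sum.inr (Sum.inr ()) := by
        intro h
        have h2 : (σ.symm (Sum.inr (Sum.inr ()))).val = (i : ℕ) := by
          rw [← h, Equiv.symm_apply_apply]
        omega
      obtain ⟨d, hd1, hd2, hd3⟩ := hDFS (σ i) (σ j) (Sum.inr (Sum.inr ()))
        (by rw [Fin.lt_def, Equiv.symm_apply_apply, Equiv.symm_apply_apply]; omega)
        (by rw [Fin.lt_def, Equiv.symm_apply_apply]; omega)
        (slg_adj_y G hiy) hne
      rw [Fin.lt_def, Equiv.symm_apply_apply] at hd1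
      rw [Fin.lt_def, Equiv.symm_apply_apply] at hd2
      omega
    set i0 : Fin (Fintype.card (V ⊕ V ⊕ Unit)) := ⟨0, hN0⟩ with hi0_def
    -- every vertex of V occurs before y
    have hVpos : ∀ v : V, (σ.symm (Sum.inl v)).val < P := by
      intro v
      by_cases h0 : (σ.symm (Sum.inr (Sum.inl v))).val = 0
      · have hσ0 : σ i0 = Sum.inr (Sum.inl v) := by
          have h1 : σ.symm (Sum.inr (Sum.inl v)) = i0 := Fin.ext h0
          rw [← h1, Equiv.apply_symm_apply]
        by_cases hP1 : P = 1
        · exfalso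
          obtain ⟨u1, u2, hu⟩ :=
            Fintype.exists_pair_of_one_lt_card (show 1 < Fintype.card V by omega)
          have key : ∀ k : V, k = v := by
            intro k
            have hk0 : (σ.symm (Sum.inl k)).val ≠ 0 := by
              intro h
              have h2 : σ.symm (Sum.inl k) = σ.symm (Sum.inr (Sum.inl v)) :=
                Fin.ext (by omega)
              exact absurd (σ.symm.injective h2) (by simp)
            obtain ⟨z, hz1, hz2⟩ := hnpar (Sum.inl k) (by simp) hk0
            have hz0 : σ.symm z = i0 := Fin.ext (show (σ.symm z).val = 0 by omega)
            have hzv : z = Sum.inr (Sum.inl v) := by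
              rw [← hσ0, ← hz0, Equiv.apply_symm_apply]
            rw [hzv] at hz1
            rcases (slg_adj_pendant G).1 hz1.symm with h | h
            · exact Sum.inl.inj h
            · simp at h
          exact hu ((key u1).trans (key u2).symm)
        · have h1N : (1 : ℕ) < (Fintype.card (V ⊕ V ⊕ Unit)) := by omega
          obtain ⟨z, hz1, hz2⟩ := hGS (σ ⟨1, h1N⟩)
            (by rw [Equiv.symm_apply_apply]; exact one_ne_zero)
          rw [Fin.lt_def, Equiv.symm_apply_apply] at hz1
          have hz1' : (σ.symm z).val < 1 := hz1
          have hz0 : σ.symm z = i0 := Fin.ext (show (σ.symm z).val = 0 by omega)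
          have hzv : z = Sum.inr (Sum.inl v) := by
            rw [← hσ0, ← hz0, Equiv.apply_symm_apply]
          rw [hzv] at hz2
          rcases (slg_adj_pendant G).1 hz2.symm with h | h
          · have h2 : (σ.symm (Sum.inl v)).val = 1 := by
              rw [← h, Equiv.symm_apply_apply]
            omega
          · exfalso
            have h2 : P = 1 := by
              rw [hP_def, ← h, Equiv.symm_apply_apply]
            exact hP1 h2
      · obtain ⟨z, hz1, hz2⟩ := hnpar (Sum.inr (Sum.inl v)) (by simp) h0
        rcases (slg_adj_pendant G).1 hz1 with h | h
        · rw [h] at hz2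
          exact hz2
        · rw [h] at hz2
          omega
    -- interior positions before y hold vertices of V
    have hint : ∀ i : Fin (Fintype.card (V ⊕ V ⊕ Unit)), 0 < (i : ℕ) → (i : ℕ) + 1 < P → ∃ v : V, σ i = Sum.inl v := by
      intro i h1 h2
      rcases hσi : σ i with v | v | ⟨⟩
      · exact ⟨v, rfl⟩
      · exfalso
        have ha := hF1 ⟨(i : ℕ) - 1, by omega⟩ i (show (i : ℕ) - 1 + 1 = (i : ℕ) by omega)
          (by omega)
        have hb := hF1 i ⟨(i : ℕ) + 1, by omega⟩ rfl (show (i : ℕ) + 1 < P by omega)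
        rw [hσi] at ha hb
        rcases (slg_adj_pendant G).1 ha with hA | hA
        · rcases (slg_adj_pendant G).1 hb.symm with hB | hB
          · have h3 : σ (⟨(i : ℕ) - 1, by omega⟩ : Fin (Fintype.card (V ⊕ V ⊕ Unit))) = σ (⟨(i : ℕ) + 1, by omega⟩ : Fin (Fintype.card (V ⊕ V ⊕ Unit))) := by
              rw [hA, hB]
            have h4 := σ.injective h3
            have h5 : (i : ℕ) - 1 = (i : ℕ) + 1 := congrArg Fin.val h4
            omega
          · have h3 : P = (i : ℕ) + 1 := by
              rw [hP_def, ← hB, Equiv.symm_apply_apply]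
            omega
        · have h3 : P = (i : ℕ) - 1 := by
            rw [hP_def, ← hA, Equiv.symm_apply_apply]
          omega
      · exfalso
        have h3 : P = (i : ℕ) := by
          rw [hP_def, ← hσi, Equiv.symm_apply_apply]
        omega
    set iP : Fin (Fintype.card (V ⊕ V ⊕ Unit)) := ⟨P - 1, by omega⟩ with hiP_def
    set s : ℕ := if (σ i0).isLeft then 0 else 1 with hs_def
    set e : ℕ := if (σ iP).isLeft then P - 1 else P - 2 with he_def
    have hs1 : s ≤ 1 := by rw [hs_def]; split <;> omega
    have heP : e ≤ P - 1 := by rw [he_def]; split <;> omega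
    have heP2 : P - 2 ≤ e := by rw [he_def]; split <;> omega
    -- all positions in [s, e] hold vertices of V
    have hA : ∀ i : Fin (Fintype.card (V ⊕ V ⊕ Unit)), s ≤ (i : ℕ) → (i : ℕ) ≤ e → ∃ v : V, σ i = Sum.inl v := by
      intro i hsi hie
      by_cases h0 : (i : ℕ) = 0
      · have hL : (σ i0).isLeft := by
          by_contra hL
          have : s = 1 := by rw [hs_def, if_neg hL]
          omega
        obtain ⟨v, hv⟩ := Sum.isLeft_iff.1 hL
        exact ⟨v, by rw [show i = i0 from Fin.ext h0]; exact hv⟩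
      · by_cases hlast : (i : ℕ) + 1 = P
        · have hiP : i = iP := Fin.ext (show (i : ℕ) = P - 1 by omega)
          have hL : (σ iP).isLeft := by
            by_contra hL
            have : e = P - 2 := by rw [he_def, if_neg hL]
            omega
          obtain ⟨v, hv⟩ := Sum.isLeft_iff.1 hL
          exact ⟨v, by rw [hiP]; exact hv⟩
        · exact hint i (by omega) (by omega)
    -- all vertices of V are in positions [s, e]
    have hB : ∀ v : V, s ≤ (σ.symm (Sum.inl v)).val ∧ (σ.symm (Sum.inl v)).val ≤ e := by
      intro v
      have hvP := hVpos v
      constructor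
      · by_cases h0 : (σ.symm (Sum.inl v)).val = 0
        · have h1 : σ i0 = Sum.inl v := by
            rw [← show σ.symm (Sum.inl v) = i0 from Fin.ext h0, Equiv.apply_symm_apply]
          have : s = 0 := by rw [hs_def, if_pos (by rw [h1]; rfl)]
          omega
        · omega
      · by_cases hlast : (σ.symm (Sum.inl v)).val + 1 = P
        · have h1 : σ iP = Sum.inl v := by
            rw [← show σ.symm (Sum.inl v) = iP from Fin.ext (show (σ.symm (Sum.inl v)).val = P - 1 by omega), Equiv.apply_symm_apply]
          have : e = P - 1 := by rw [he_def, if_pos (by rw [h1]; rfl)]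
          omega
        · omega
    have hse : s ≤ e := by
      obtain ⟨v0⟩ := (inferInstance : Nonempty V)
      exact le_trans (hB v0).1 (hB v0).2
    -- the function giving the vertex of V at each position
    set g : ℕ → V := fun i =>
      Sum.elim id (Sum.elim id fun _ => Classical.arbitrary V)
        (σ ⟨i % (Fintype.card (V ⊕ V ⊕ Unit)), Nat.mod_lt _ hN0⟩) with hg_def
    have hg : ∀ i : Fin (Fintype.card (V ⊕ V ⊕ Unit)), s ≤ (i : ℕ) → (i : ℕ) ≤ e → σ i = Sum.inl (g (i : ℕ)) := by
      intro i h1 h2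
      obtain ⟨v, hv⟩ := hA i h1 h2
      have hmod : (⟨(i : ℕ) % (Fintype.card (V ⊕ V ⊕ Unit)), Nat.mod_lt _ hN0⟩ : Fin (Fintype.card (V ⊕ V ⊕ Unit))) = i :=
        Fin.ext (Nat.mod_eq_of_lt i.isLt)
      have hgi : g (i : ℕ) = v := by
        simp only [hg_def, hmod, hv, Sum.elim_inl, id]
      rw [hv, hgi]
    have hadjg : ∀ i : ℕ, s ≤ i → i < e → G.Adj (g i) (g (i + 1)) := by
      intro i h1 h2
      have hiN : i < (Fintype.card (V ⊕ V ⊕ Unit)) := by omega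
      have hi1N : i + 1 < (Fintype.card (V ⊕ V ⊕ Unit)) := by omega
      have hadj := hF1 ⟨i, hiN⟩ ⟨i + 1, hi1N⟩ rfl (show i + 1 < P by omega)
      rw [hg ⟨i, hiN⟩ h1 (show i ≤ e by omega), hg ⟨i + 1, hi1N⟩ (show s ≤ i + 1 by omega) (show i + 1 ≤ e by omega)] at hadj
      exact (slg_adj_inl_inl G).1 hadj
    obtain ⟨q, hq⟩ := walk_of_chain G g s (e - s) (fun i hi1 hi2 => hadjg i hi1 (by omega))
    refine ⟨g s, g (s + (e - s)), q, ?_⟩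
    intro v
    rw [hq]
    have hnd : ((List.range (e - s + 1)).map (fun j => g (s + j))).Nodup := by
      refine List.Nodup.map_on ?_ List.nodup_range
      intro j1 hj1 j2 hj2 hgj
      rw [List.mem_range] at hj1 hj2
      have hb1 : s + j1 < Fintype.card (V ⊕ V ⊕ Unit) := by omega
      have hb2 : s + j2 < Fintype.card (V ⊕ V ⊕ Unit) := by omega
      have e1 := hg ⟨s + j1, hb1⟩ (show s ≤ s + j1 by omega) (show s + j1 ≤ e by omega)
      have e2 := hg ⟨s + j2, hb2⟩ (show s ≤ s + j2 by omega) (show s + j2 ≤ e by omega)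
      have e3 := e1.trans ((congrArg Sum.inl hgj).trans e2.symm)
      have e4 := σ.injective e3
      have e5 : s + j1 = s + j2 := congrArg Fin.val e4
      omega
    refine List.count_eq_one_of_mem hnd ?_
    rw [List.mem_map]
    have hb := hB v
    refine ⟨(σ.symm (Sum.inl v)).val - s, List.mem_range.2 (by omega), ?_⟩
    have hpos : s + ((σ.symm (Sum.inl v)).val - s) = (σ.symm (Sum.inl v)).val := by omega
    show g (s + ((σ.symm (Sum.inl v)).val - s)) = v
    rw [hpos]
    have e1 := hg (σ.symm (Sum.inl v)) hb.1 hb.2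
    rw [Equiv.apply_symm_apply] at e1
    exact (Sum.inl.inj e1).symm
  · rintro ⟨u, w, p, hp⟩
    have hmem : ∀ v : V, v ∈ p.support := fun v => hp.mem_support v
    have hnd : p.support.Nodup := List.nodup_iff_count_le_one.2 fun a => (hp a).le
    have hlen : p.support.length = Fintype.card V := by
      have h1 := hp.length_eq
      have h2 := SimpleGraph.Walk.length_support p
      omega
    have hcard : Fintype.card (V ⊕ V ⊕ Unit) = Fintype.card V + (Fintype.card V + 1) := by
      simp [Fintype.card_sum]
    set n := Fintype.card V with hn_def
    set L := p.support with hL_def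
    have hidx : ∀ v : V, L.idxOf v < n := fun v => hlen ▸ List.idxOf_lt_length_iff.2 (hmem v)
    set base := hamEquiv u L n hlen hnd hmem with hbase
    have hsym : ∀ x, (((finCongr hcard).trans base).symm x).val = (base.symm x).val := by
      intro x
      rw [Equiv.symm_trans_apply]
      simp
    have pos_inl : ∀ v : V,
        (((finCongr hcard).trans base).symm (Sum.inl v)).val = L.idxOf v :=
      fun v => (hsym _).trans (hamEquiv_symm_inl u L n hlen hnd hmem v)
    have pos_pen : ∀ v : V,
        (((finCongr hcard).trans base).symm (Sum.inr (Sum.inl v))).val = n + 1 + L.idxOf v :=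
      fun v => (hsym _).trans (hamEquiv_symm_pendant u L n hlen hnd hmem v)
    have pos_y : (((finCongr hcard).trans base).symm (Sum.inr (Sum.inr ()))).val = n :=
      (hsym _).trans (hamEquiv_symm_y u L n hlen hnd hmem)
    set gtv : ℕ → V := fun k => L.getD k u with hgtv
    have hgt_idx : ∀ v : V, gtv (L.idxOf v) = v := by
      intro v
      have hget : L.idxOf v < L.length := List.idxOf_lt_length_iff.2 (hmem v)
      simp only [hgtv, List.getD_eq_get L u ⟨_, hget⟩, List.idxOf_get]
    have hidx_gt : ∀ k, k < n → L.idxOf (gtv k) = k := by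
      intro k hk
      have hget : k < L.length := by omega
      simp only [hgtv, List.getD_eq_get L u ⟨_, hget⟩]
      exact List.get_idxOf hnd _
    have hchain : ∀ k, k + 1 < n → G.Adj (gtv k) (gtv (k + 1)) := by
      intro k hk
      have h1 : k < L.length := by omega
      have h2 : k + 1 < L.length := by omega
      have h3 := List.isChain_iff_getElem.1 p.isChain_adj_support k (by rw [← hL_def]; omega)
      simp only [hgtv, List.getD_eq_get L u ⟨_, h1⟩, List.getD_eq_get L u ⟨_, h2⟩]
      exact h3
    refine ⟨(finCongr hcard).trans base, ⟨?_, ?_⟩, ?_, ?_⟩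
    · -- GS ordering
      rintro (v | v | ⟨⟩) h0
      · rw [pos_inl v] at h0
        have hk1 : L.idxOf v < n := hidx v
        refine ⟨Sum.inl (gtv (L.idxOf v - 1)), ?_, ?_⟩
        · rw [Fin.lt_def, pos_inl, pos_inl, hidx_gt _ (by omega)]
          omega
        · have h2 := hchain (L.idxOf v - 1) (by omega)
          rw [show L.idxOf v - 1 + 1 = L.idxOf v by omega, hgt_idx v] at h2
          exact (slg_adj_inl_inl G).2 h2
      · exact ⟨Sum.inr (Sum.inr ()), by rw [Fin.lt_def, pos_y, pos_pen]; omega,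
          (slg_adj_pendant G).2 (Or.inr rfl)⟩
      · refine ⟨Sum.inl (gtv 0), ?_, slg_adj_y G (by simp)⟩
        rw [Fin.lt_def, pos_inl, pos_y, hidx_gt 0 (by omega)]
        omega
    · -- DFS four-point condition
      rintro a (v | v | ⟨⟩) c hab hbc hac hnadj
      · have hk1 : L.idxOf v < n := hidx v
        have hka : (((finCongr hcard).trans base).symm a).val < L.idxOf v := by
          rw [Fin.lt_def, pos_inl] at hab; exact hab
        have hk0 : 1 ≤ L.idxOf v := by omega
        have hadj_db : (splitLeafGraph G).Adj (Sum.inl (gtv (L.idxOf v - 1))) (Sum.inl v) := by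
          have h2 := hchain (L.idxOf v - 1) (by omega)
          rw [show L.idxOf v - 1 + 1 = L.idxOf v by omega, hgt_idx v] at h2
          exact (slg_adj_inl_inl G).2 h2
        have hne : a ≠ Sum.inl (gtv (L.idxOf v - 1)) := fun h => hnadj (h ▸ hadj_db)
        have hpos_ne : (((finCongr hcard).trans base).symm a).val ≠ L.idxOf v - 1 := by
          intro h
          apply hne
          apply ((finCongr hcard).trans base).symm.injective
          apply Fin.ext
          rw [h, pos_inl, hidx_gt _ (by omega)]
        refine ⟨Sum.inl (gtv (L.idxOf v - 1)), ?_, ?_, hadj_db⟩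
        · rw [Fin.lt_def, pos_inl, hidx_gt _ (by omega)]
          omega
        · rw [Fin.lt_def, pos_inl, pos_inl, hidx_gt _ (by omega)]
          omega
      · rcases a with a | a | ⟨⟩
        · refine ⟨Sum.inr (Sum.inr ()), ?_, ?_, (slg_adj_pendant G).2 (Or.inr rfl)⟩
          · rw [Fin.lt_def, pos_inl, pos_y]
            exact hidx a
          · rw [Fin.lt_def, pos_y, pos_pen]
            omega
        · exfalso
          rcases c with c | c | ⟨⟩
          · rw [Fin.lt_def, pos_pen, pos_inl] at hbc
            have := hidx c
            omega
          · rcases (slg_adj_pendant G).1 hac with h | h <;> simp at h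
          · rw [Fin.lt_def, pos_pen, pos_y] at hbc
            omega
        · exact absurd ((slg_adj_pendant G).2 (Or.inr rfl)) hnadj
      · exact absurd (slg_adj_y G (fun h => absurd hab (by rw [h]; exact lt_irrefl _))) hnadj
    · -- y is not the first vertex
      rw [pos_y]
      omega
    · -- y is the F-parent of nobody
      rintro (v | v | ⟨⟩) ⟨h0, hadj, hmin⟩
      · rw [pos_inl] at h0
        have hk1 : L.idxOf v < n := hidx v
        have hadj_db : (splitLeafGraph G).Adj (Sum.inl (gtv (L.idxOf v - 1))) (Sum.inl v) := by
          have h2 := hchain (L.idxOf v - 1) (by omega)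
          rw [show L.idxOf v - 1 + 1 = L.idxOf v by omega, hgt_idx v] at h2
          exact (slg_adj_inl_inl G).2 h2
        have h2 := hmin _ hadj_db
        rw [Fin.le_def, pos_y, pos_inl, hidx_gt _ (by omega)] at h2
        omega
      · have h2 := hmin (Sum.inl v) ((slg_adj_pendant G).2 (Or.inl rfl))
        rw [Fin.le_def, pos_y, pos_inl] at h2
        have := hidx v
        omega
      · exact (splitLeafGraph G).irrefl hadj
end
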